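/- arXiv:1811.07521 — 15 statements merged into one kernel-verified Lean document; each statement's English description precedes it below -/
import Mathlib

section
/- Let R be a finite commutative ring with identity and G a subgroup of the multiplicative monoid (R, ×) consisting of units, such that every element of (G−1)\{0} is invertible in R. Then the collection S = {αG : α ∈ R} of multiplicative cosets forms a partition of R. -/
/-- The multiplicative cosets `αG` partition `R` when every nonzero element of
`G - 1` is a unit. -/
theorem coset_partition {R : Type*} [CommRing R] [Fintype R] (G : Subgroup Rˣ)
    (hG : ∀ g ∈ G, ((g : Rˣ) : R) - 1 ≠ 0 → IsUnit (((g : Rˣ) : R) - 1)) :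
    Setoid.IsPartition
      {s : Set R | ∃ α : R, s = {x : R | ∃ g ∈ G, x = α * ((g : Rˣ) : R)}} := by
  constructor
  · rintro ⟨α, hα⟩
    have : α ∈ (∅ : Set R) := by
      rw [hα]
      exact ⟨1, G.one_mem, by simp⟩
    exact this
  · intro a
    refine ⟨{x : R | ∃ g ∈ G, x = a * ((g : Rˣ) : R)},
      ⟨⟨a, rfl⟩, ⟨1, G.one_mem, by simp⟩⟩, ?_⟩
    rintro s ⟨⟨α, rfl⟩, g, hg, hag⟩
    ext x
    simp only [Set.mem_setOf_eq]
    constructor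
    · rintro ⟨h, hh, rfl⟩
      refine ⟨g⁻¹ * h, G.mul_mem (G.inv_mem hg) hh, ?_⟩
      rw [hag, Units.val_mul, mul_assoc, Units.mul_inv_cancel_left]
    · rintro ⟨h, hh, rfl⟩
      exact ⟨g * h, G.mul_mem hg hh, by rw [hag, Units.val_mul, mul_assoc]⟩
end

section
/- Let R be a finite commutative ring of order n with identity and G ≤ R^× a subgroup of order e with (G−1)\{0} ⊆ R^×. Then the partition S = {αG : α ∈ R} of R has exactly (n−1)/e + 1 blocks. -/
/-!
The sets `αG` are the orbits of `G` acting on `R` by multiplication, so by Burnside's lemma their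
number times `e` is `∑_{g ∈ G} |Fix g|`. The identity fixes all `n` elements, while for `g ≠ 1`
the unit `g - 1` forces `gx = x ⇒ x = 0`, so each of the other `e - 1` elements fixes only `0`.
Hence the number of blocks is `(n + e - 1) / e`.
-/

open MulAction

theorem MulAction.ncard_range_orbit {G X : Type*} [Group G] [MulAction G X] :
    (Set.range fun a : X => orbit G a).ncard = Nat.card (orbitRel.Quotient G X) := by
  rw [← Nat.card_coe_set_eq, ← Nat.card_range_of_injective orbitRel.Quotient.orbit_injective,
    ← Quotient.mk''_surjective.range_comp]
  rfl

section
variable {R : Type*} [CommRing R] {G : Subgroup Rˣ}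

theorem setOf_exists_mul_eq_orbit (α : R) :
    {x : R | ∃ g ∈ G, x = α * ((g : Rˣ) : R)} = orbit G α := by
  ext x
  simp only [Set.mem_ofPred_eq, mem_orbit_iff, Subtype.exists, Subgroup.mk_smul, Units.smul_def,
    smul_eq_mul, mul_comm α, exists_prop, eq_comm]

theorem fixedBy_eq_zero_of_isUnit_sub_one {g : G} (hg : IsUnit (((g : Rˣ) : R) - 1)) :
    fixedBy R g = {0} := by
  ext x
  simp only [mem_fixedBy, Set.mem_singleton_iff, Subgroup.smul_def, Units.smul_def, smul_eq_mul]
  rw [← sub_eq_zero, ← sub_one_mul, hg.mul_right_eq_zero]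

theorem card_orbitRel_quotient_mul_card [Finite R]
    (hG : ∀ g ∈ G, ((g : Rˣ) : R) - 1 ≠ 0 → IsUnit (((g : Rˣ) : R) - 1)) :
    Nat.card (orbitRel.Quotient G R) * Nat.card G = Nat.card R + (Nat.card G - 1) := by
  classical
  have := Fintype.ofFinite R
  have hfix : ∀ g ∈ ({1}ᶜ : Finset G), Fintype.card (fixedBy R g) = 1 := by
    intro g hg
    have hg1 : ((g : Rˣ) : R) - 1 ≠ 0 := by
      simpa [sub_eq_zero, Units.val_eq_one] using Finset.mem_compl.mp hg
    simp only [fixedBy_eq_zero_of_isUnit_sub_one (hG g g.2 hg1), Set.card_singleton]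
  have burnside := sum_card_fixedBy_eq_card_orbits_mul_card_group G R
  rw [Fintype.sum_eq_add_sum_compl 1, Finset.sum_congr rfl hfix, Finset.sum_const,
    Finset.card_compl, Finset.card_singleton, smul_eq_mul, mul_one] at burnside
  simp only [fixedBy_one_eq_univ, Fintype.card_setUniv] at burnside
  simpa only [Nat.card_eq_fintype_card] using burnside.symm

end

/-- The coset partition `S = {αG : α ∈ R}` has exactly `(n-1)/e + 1` blocks,
where `n = |R|` and `e = |G|`. -/
theorem coset_partition_card {R : Type*} [CommRing R] [Fintype R] (G : Subgroup Rˣ)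
    (hG : ∀ g ∈ G, ((g : Rˣ) : R) - 1 ≠ 0 → IsUnit (((g : Rˣ) : R) - 1)) :
    Set.ncard {s : Set R | ∃ α : R, s = {x : R | ∃ g ∈ G, x = α * ((g : Rˣ) : R)}} =
      (Nat.card R - 1) / Nat.card G + 1 := by
  have hS : {s : Set R | ∃ α : R, s = {x : R | ∃ g ∈ G, x = α * ((g : Rˣ) : R)}} =
      Set.range fun α : R => orbit G α := by
    simp_rw [setOf_exists_mul_eq_orbit]
    ext s
    exact exists_congr fun _ => eq_comm
  have hcount := card_orbitRel_quotient_mul_card hG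
  have he : 0 < Nat.card G := Nat.card_pos
  have hn : 0 < Nat.card R := Nat.card_pos
  rw [hS, ncard_range_orbit, ← Nat.add_div_right _ he,
    show Nat.card R - 1 + Nat.card G = Nat.card R + (Nat.card G - 1) by omega, ← hcount,
    Nat.mul_div_cancel _ he]
end

section
/- Let R be a finite commutative ring with identity, G ≤ R^× a subgroup with (G−1)\{0} ⊆ R^×, and let f: R → S map x to the unique coset αG containing x, where S = {αG : α ∈ R}. Then for every nonzero a ∈ R, the set {x ∈ R : f(x+a) = f(x)} equals {a(g−1)^{−1} : g ∈ G, g ≠ 1}. -/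
/-- For `f` mapping `x` to the coset `xG`, and any nonzero `a`, the solution set of
`f(x+a) = f(x)` is `{a * (g-1)⁻¹ : g ∈ G, g ≠ 1}`. -/
theorem zdb_solution_set {R : Type*} [CommRing R] [Fintype R] (G : Subgroup Rˣ)
    (hG : ∀ g ∈ G, ((g : Rˣ) : R) - 1 ≠ 0 → IsUnit (((g : Rˣ) : R) - 1))
    (a : R) (ha : a ≠ 0) :
    {x : R | {y : R | ∃ g ∈ G, y = (x + a) * ((g : Rˣ) : R)} =
             {y : R | ∃ g ∈ G, y = x * ((g : Rˣ) : R)}} =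
    {x : R | ∃ g ∈ G, ((g : Rˣ) : R) ≠ 1 ∧ x = a * Ring.inverse (((g : Rˣ) : R) - 1)} := by
  ext x
  simp only [Set.mem_setOf_eq]
  constructor
  · intro h
    have hx : x + a ∈ {y : R | ∃ g ∈ G, y = x * ((g : Rˣ) : R)} := by
      rw [← h]; exact ⟨1, G.one_mem, by simp⟩
    obtain ⟨g, hg, hxy⟩ := hx
    have hgne : ((g : Rˣ) : R) - 1 ≠ 0 := by
      intro h0
      apply ha
      have h1 : ((g : Rˣ) : R) = 1 := by linear_combination h0
      rw [h1, mul_one] at hxy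
      linear_combination hxy
    have hu := hG g hg hgne
    refine ⟨g, hg, fun h1 => hgne (sub_eq_zero_of_eq h1), ?_⟩
    have : x * (((g : Rˣ) : R) - 1) = a := by linear_combination -hxy
    calc x = x * ((((g : Rˣ) : R) - 1) * Ring.inverse (((g : Rˣ) : R) - 1)) := by
              rw [Ring.mul_inverse_cancel _ hu, mul_one]
      _ = a * Ring.inverse (((g : Rˣ) : R) - 1) := by rw [← mul_assoc, this]
  · rintro ⟨g, hg, hgne, rfl⟩
    set u := ((g : Rˣ) : R) - 1 with hu_def
    have hu := hG g hg (sub_ne_zero.mpr hgne)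
    have hxa : a * Ring.inverse u + a = (a * Ring.inverse u) * ((g : Rˣ) : R) := by
      have h1 : a * Ring.inverse u * u = a := by
        rw [mul_assoc, Ring.inverse_mul_cancel _ hu, mul_one]
      calc a * Ring.inverse u + a = a * Ring.inverse u + a * Ring.inverse u * u := by rw [h1]
        _ = (a * Ring.inverse u) * ((g : Rˣ) : R) := by rw [hu_def]; ring
    ext y
    simp only [Set.mem_setOf_eq]
    constructor
    · rintro ⟨h, hh, rfl⟩
      exact ⟨g * h, G.mul_mem hg hh, by rw [hxa]; push_cast; ring⟩
    · rintro ⟨h, hh, rfl⟩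
      refine ⟨g⁻¹ * h, G.mul_mem (G.inv_mem hg) hh, ?_⟩
      rw [hxa]
      push_cast
      have : ((g : Rˣ) : R) * (((g⁻¹ : Rˣ) : R)) = 1 := by
        rw [← Units.val_mul, mul_inv_cancel, Units.val_one]
      calc a * Ring.inverse u * ↑(h : Rˣ)
          = a * Ring.inverse u * ((g : Rˣ) * ((g⁻¹ : Rˣ) : R)) * ↑(h : Rˣ) := by
            rw [this, mul_one]
        _ = a * Ring.inverse u * ↑(g : Rˣ) * (((g⁻¹ : Rˣ) : R) * ↑(h : Rˣ)) := by ring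
end

section
/- Let R be a finite commutative ring of order n with identity and G ≤ R^× a subgroup of order e with (G−1)\{0} ⊆ R^×. Let f: R → S send x to the coset αG containing it. Then f is an (n, (n−1)/e + 1, e−1) zero-difference balanced function: for every nonzero a ∈ R, |{x ∈ R : f(x+a) = f(x)}| = e−1, and |Im(f)| = (n−1)/e + 1. -/
/-- The map sending `x` to its coset `xG` is an `(n, (n-1)/e + 1, e-1)`
zero-difference balanced function. -/
theorem coset_map_is_ZDB {R : Type*} [CommRing R] [Fintype R] (G : Subgroup Rˣ)
    (hG : ∀ g ∈ G, ((g : Rˣ) : R) - 1 ≠ 0 → IsUnit (((g : Rˣ) : R) - 1))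
    (f : R → Set R)
    (hf : ∀ x : R, f x = {y : R | ∃ g ∈ G, y = x * ((g : Rˣ) : R)}) :
    Set.ncard (Set.range f) = (Nat.card R - 1) / Nat.card G + 1 ∧
    ∀ a : R, a ≠ 0 →
      Set.ncard {x : R | f (x + a) = f x} = Nat.card G - 1 := by
  classical
  -- every `g ∈ G` with `g ≠ 1` has `g - 1` a unit
  have hunit : ∀ g : Rˣ, g ∈ G → (g : R) ≠ 1 → IsUnit ((g : R) - 1) := fun g hg h1 =>
    hG g hg (sub_ne_zero.mpr h1)
  -- cancellation lemma
  have hcancel : ∀ x : R, x ≠ 0 → ∀ g : Rˣ, g ∈ G → ∀ g' : Rˣ, g' ∈ G →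
      x * (g : R) = x * (g' : R) → g = g' := by
    intro x hx g hg g' hg' h
    by_contra hne
    have hune : (((g'⁻¹ * g : Rˣ) : R)) ≠ 1 := by
      intro h1
      exact hne (inv_mul_eq_one.mp (Units.ext h1)).symm
    have hu := hunit _ (G.mul_mem (G.inv_mem hg') hg) hune
    have hkey : (x * (g' : R)) * (((g'⁻¹ * g : Rˣ) : R) - 1) = 0 := by
      have : (x * (g' : R)) * ((g'⁻¹ * g : Rˣ) : R) = x * (g : R) := by
        simp [Units.val_mul, mul_assoc, Units.mul_inv_cancel_left]
      rw [mul_sub, this, mul_one, h, sub_self]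
    have hx0 : x * (g' : R) = 0 := by
      obtain ⟨u, huu⟩ := hu
      rw [← huu] at hkey
      calc x * (g' : R) = x * (g' : R) * ((u : R) * ((u⁻¹ : Rˣ) : R)) := by simp
        _ = (x * (g' : R) * ((u : R))) * ((u⁻¹ : Rˣ) : R) := by ring
        _ = 0 := by rw [hkey, zero_mul]
    have : x = 0 := by
      calc x = x * ((g' : R) * ((g'⁻¹ : Rˣ) : R)) := by simp
        _ = (x * (g' : R)) * ((g'⁻¹ : Rˣ) : R) := by ring
        _ = 0 := by rw [hx0, zero_mul]
    exact hx this
  -- `x ∈ f x`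
  have hfx : ∀ x : R, x ∈ f x := by
    intro x; rw [hf]; exact ⟨1, G.one_mem, by simp⟩
  -- multiplying by an element of G does not change the coset
  have hmul : ∀ x : R, ∀ g : Rˣ, g ∈ G → f (x * (g : R)) = f x := by
    intro x g hg
    rw [hf, hf]
    ext y
    constructor
    · rintro ⟨h, hh, rfl⟩
      exact ⟨g * h, G.mul_mem hg hh, by simp [Units.val_mul, mul_assoc]⟩
    · rintro ⟨h, hh, rfl⟩
      refine ⟨g⁻¹ * h, G.mul_mem (G.inv_mem hg) hh, ?_⟩
      simp [Units.val_mul, mul_assoc, Units.mul_inv_cancel_left]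
  -- membership in a coset characterizes equality of cosets
  have hiff : ∀ x y : R, f x = f y ↔ y ∈ f x := by
    intro x y
    constructor
    · intro h; rw [h]; exact hfx y
    · intro h
      rw [hf] at h
      obtain ⟨g, hg, rfl⟩ := h
      exact (hmul x g hg).symm
  -- `f 0 = {0}`
  have hf0 : f 0 = {0} := by
    rw [hf]; ext y
    simp only [Set.mem_setOf_eq, Set.mem_singleton_iff, zero_mul]
    constructor
    · rintro ⟨g, hg, rfl⟩; rfl
    · rintro rfl; exact ⟨1, G.one_mem, rfl⟩
  -- the coset of a nonzero element has `|G|` elements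
  have horb : ∀ x : R, x ≠ 0 → (f x).ncard = Nat.card G := by
    intro x hx
    have himg : f x = (fun g : Rˣ => x * (g : R)) '' (G : Set Rˣ) := by
      rw [hf]; ext y
      simp only [Set.mem_setOf_eq, Set.mem_image, SetLike.mem_coe]
      constructor
      · rintro ⟨g, hg, rfl⟩; exact ⟨g, hg, rfl⟩
      · rintro ⟨g, hg, rfl⟩; exact ⟨g, hg, rfl⟩
    rw [himg, Set.ncard_image_of_injOn, ← Nat.card_coe_set_eq]
    · rfl
    · intro g hg g' hg' h
      exact hcancel x hx g hg g' hg' h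
  -- fibers of f are the cosets themselves
  have hfiber : ∀ x : R, {x' : R | f x' = f x} = f x := by
    intro x
    ext x'
    simp only [Set.mem_setOf_eq]
    constructor
    · intro h; rw [← h]; exact hfx x'
    · intro h; exact ((hiff x x').mpr h).symm
  constructor
  · -- the image size
    set s : Finset R := Finset.univ.filter (· ≠ 0) with hs
    set t : Finset (Set R) := s.image f with ht
    have hmem_s : ∀ x : R, x ∈ s ↔ x ≠ 0 := by
      intro x; simp [hs]
    have hscard : s.card = Fintype.card R - 1 := by
      rw [hs, Finset.filter_ne', Finset.card_erase_of_mem (Finset.mem_univ 0),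
        Finset.card_univ]
    have hfibcard : ∀ b ∈ t, (s.filter fun x => f x = b).card = Nat.card G := by
      intro b hb
      obtain ⟨x₀, hx₀s, rfl⟩ := Finset.mem_image.mp hb
      have hx₀ : x₀ ≠ 0 := (hmem_s x₀).mp hx₀s
      have hset : (↑(s.filter fun x => f x = f x₀) : Set R) = f x₀ := by
        ext x
        simp only [Finset.coe_filter, Set.mem_setOf_eq, hmem_s]
        constructor
        · rintro ⟨-, h⟩
          rw [← h]; exact hfx x
        · intro h
          refine ⟨?_, ((hiff x₀ x).mpr h).symm⟩
          intro h0
          subst h0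
          rw [hf] at h
          obtain ⟨g, hg, hgl⟩ := h
          apply hx₀
          have := congrArg (· * ((g⁻¹ : Rˣ) : R)) hgl
          simpa [mul_assoc] using this.symm
      have := congrArg Set.ncard hset
      rw [Set.ncard_coe_finset] at this
      rw [this, horb x₀ hx₀]
    have hsum : s.card = t.card * Nat.card G := by
      rw [Finset.card_eq_sum_card_fiberwise
        (fun x hx => Finset.mem_image_of_mem f hx : ∀ x ∈ s, f x ∈ t)]
      rw [Finset.sum_congr rfl hfibcard, Finset.sum_const, smul_eq_mul]
    have htcard : (Nat.card R - 1) / Nat.card G = t.card := by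
      apply Nat.div_eq_of_eq_mul_left Nat.card_pos
      rw [Nat.card_eq_fintype_card, ← hscard, hsum]
    have hrange : Set.range f = insert (f 0) (↑t : Set (Set R)) := by
      ext b
      simp only [Set.mem_range, Set.mem_insert_iff, Finset.coe_image, Set.mem_image,
        Finset.mem_coe, ht]
      constructor
      · rintro ⟨x, rfl⟩
        by_cases hx : x = 0
        · left; rw [hx]
        · right; exact ⟨x, (hmem_s x).mpr hx, rfl⟩
      · rintro (rfl | ⟨x, -, rfl⟩) <;> exact ⟨_, rfl⟩
    have h0t : f 0 ∉ (↑t : Set (Set R)) := by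
      intro h
      rw [Finset.mem_coe] at h
      obtain ⟨x, hxs, hx0⟩ := Finset.mem_image.mp h
      have hx : x ≠ 0 := (hmem_s x).mp hxs
      have hx' : x ∈ f 0 := by rw [← hx0]; exact hfx x
      rw [hf0] at hx'
      exact hx hx'
    rw [hrange, Set.ncard_insert_of_notMem h0t, Set.ncard_coe_finset, ← htcard]
  · -- the ZDB property
    intro a ha
    set ψ : Rˣ → R := fun g => a * Ring.inverse ((g : R) - 1) with hψ
    set T : Set Rˣ := {g : Rˣ | g ∈ G ∧ (g : R) ≠ 1} with hT
    have hψval : ∀ g ∈ T, ψ g * ((g : R) - 1) = a := by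
      rintro g ⟨hg, hg1⟩
      rw [hψ]
      have := Ring.inverse_mul_cancel _ (hunit g hg hg1)
      calc a * Ring.inverse ((g : R) - 1) * ((g : R) - 1)
          = a * (Ring.inverse ((g : R) - 1) * ((g : R) - 1)) := by ring
        _ = a := by rw [this, mul_one]
    have hseteq : {x : R | f (x + a) = f x} = ψ '' T := by
      ext x
      simp only [Set.mem_setOf_eq, Set.mem_image]
      constructor
      · intro h
        have hxa : x + a ∈ f x := by
          rw [← h]; exact hfx (x + a)
        rw [hf] at hxa
        obtain ⟨g, hg, hgl⟩ := hxa
        have hg1 : (g : R) ≠ 1 := by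
          intro h1
          rw [h1, mul_one] at hgl
          exact ha (by linear_combination hgl)
        have hkey : x * ((g : R) - 1) = a := by
          rw [mul_sub, mul_one, ← hgl]; ring
        refine ⟨g, ⟨hg, hg1⟩, ?_⟩
        have hu := hunit g hg hg1
        have hinv := Ring.mul_inverse_cancel _ hu
        rw [hψ]
        calc a * Ring.inverse ((g : R) - 1)
            = x * ((g : R) - 1) * Ring.inverse ((g : R) - 1) := by rw [hkey]
          _ = x * (((g : R) - 1) * Ring.inverse ((g : R) - 1)) := by ring
          _ = x := by rw [hinv, mul_one]
      · rintro ⟨g, hgT, rfl⟩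
        have hkey := hψval g hgT
        have : ψ g + a = ψ g * (g : R) := by
          rw [← hkey]; ring
        rw [this, hmul (ψ g) g hgT.1]
    have hinjT : Set.InjOn ψ T := by
      rintro g hgT g' hgT' h
      have h1 := hψval g hgT
      have h2 := hψval g' hgT'
      have hx0 : ψ g ≠ 0 := by
        intro h0
        rw [h0, zero_mul] at h1
        exact ha h1.symm
      rw [← h] at h2
      apply hcancel (ψ g) hx0 g hgT.1 g' hgT'.1
      linear_combination h1 - h2
    have hTcard : T.ncard = Nat.card G - 1 := by
      have : T = (G : Set Rˣ) \ {1} := by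
        ext g
        simp only [hT, Set.mem_setOf_eq, Set.mem_diff, SetLike.mem_coe,
          Set.mem_singleton_iff, ← Units.val_eq_one]
      rw [this, Set.ncard_diff_singleton_of_mem (by exact G.one_mem),
        ← Nat.card_coe_set_eq]
      rfl
    rw [hseteq, Set.ncard_image_of_injOn hinjT, hTcard]
end

section
/- Let R be a finite commutative ring of order n with identity, and let G, H ≤ R^× be subgroups such that (G−1)\{0} ⊆ R^×, (H−1)\{0} ⊆ R^×, and |H| = |G| − 1. Set e = |G|. Then there exists an (en, (en−1)/(e−1) + 1, e−2) zero-difference balanced function from the abelian group (R,+) × (G,×) to Z_{(en−1)/(e−1)+1}. -/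
/-- `f : A → B` is an `(N, m, λ)` zero-difference balanced function. -/
def IsZDB {A B : Type*} [AddGroup A] (f : A → B) (N m lam : ℕ) : Prop :=
  Nat.card A = N ∧ Set.ncard (Set.range f) = m ∧
    ∀ a : A, a ≠ 0 → Set.ncard {x : A | f (x + a) = f x} = lam

open MulAction
set_option linter.unusedSectionVars false
section
variable {R : Type*} [CommRing R] [Fintype R] {G H : Subgroup Rˣ}

lemma coe_one_iff {g : G} : ((g : Rˣ) : R) = 1 ↔ g = 1 := by
  constructor
  · intro h
    have : (g : Rˣ) = 1 := Units.ext h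
    exact_mod_cast this
  · rintro rfl; simp

lemma gsub_unit (hG : ∀ g ∈ G, ((g : Rˣ) : R) - 1 ≠ 0 → IsUnit (((g : Rˣ) : R) - 1))
    {g g' : G} (h : g ≠ g') : IsUnit (((g : Rˣ) : R) - ((g' : Rˣ) : R)) := by
  have h1 : ((g'⁻¹ * g : G) : Rˣ) ∈ G := (g'⁻¹ * g).2
  have h2 : (((g'⁻¹ * g : G) : Rˣ) : R) - 1 ≠ 0 := by
    intro hc
    rw [sub_eq_zero] at hc
    have : (g'⁻¹ * g : G) = 1 := coe_one_iff.mp hc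
    exact h (by rwa [inv_mul_eq_one, eq_comm] at this)
  have h3 := hG _ h1 h2
  have key : ((g : Rˣ) : R) - ((g' : Rˣ) : R)
      = ((g' : Rˣ) : R) * ((((g'⁻¹ * g : G) : Rˣ) : R) - 1) := by
    have h4 : (g' : Rˣ) * ((g'⁻¹ * g : G) : Rˣ) = (g : Rˣ) := by
      push_cast
      exact mul_inv_cancel_left _ _
    rw [mul_sub, mul_one]
    congr 1
    rw [← h4, Units.val_mul]
  rw [key]
  exact (Units.isUnit (g' : Rˣ)).mul h3

lemma orbit_zero (H : Subgroup Rˣ) : orbit H (0 : R) = {0} := by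
  ext y
  simp only [mem_orbit_iff, Set.mem_singleton_iff]
  constructor
  · rintro ⟨h, rfl⟩; exact smul_zero h
  · rintro rfl; exact ⟨1, smul_zero 1⟩

lemma card_orbit (hH : ∀ h ∈ H, ((h : Rˣ) : R) - 1 ≠ 0 → IsUnit (((h : Rˣ) : R) - 1))
    {x : R} (hx : x ≠ 0) : Nat.card (orbit H x) = Nat.card H := by
  have hinj : Function.Injective (fun h : H => h • x) := by
    intro h h' he
    by_contra hne
    have hu := gsub_unit hH hne
    have hz : x * (((h : Rˣ) : R) - ((h' : Rˣ) : R)) = 0 := by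
      have he' : ((h : Rˣ) : R) * x = ((h' : Rˣ) : R) * x := he
      linear_combination he'
    exact hx (by rwa [hu.mul_left_eq_zero] at hz)
  calc Nat.card (orbit H x) = Nat.card (Set.range fun h : H => h • x) := rfl
    _ = Nat.card H := Nat.card_range_of_injective hinj

lemma cardR_eq (hH : ∀ h ∈ H, ((h : Rˣ) : R) - 1 ≠ 0 → IsUnit (((h : Rˣ) : R) - 1)) :
    Nat.card R = (Nat.card (orbitRel.Quotient H R) - 1) * Nat.card H + 1 := by
  classical
  letI : Fintype (orbitRel.Quotient H R) := Fintype.ofFinite _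
  letI : ∀ ω : orbitRel.Quotient H R, Fintype (orbit H ω.out) := fun _ => Fintype.ofFinite _
  set ω₀ : orbitRel.Quotient H R := Quotient.mk'' (0 : R) with hω₀
  have e1 : Nat.card R = ∑ ω : orbitRel.Quotient H R, Nat.card (orbit H ω.out) := by
    rw [Nat.card_eq_fintype_card, Fintype.card_congr (selfEquivSigmaOrbits H R),
      Fintype.card_sigma]
    exact Finset.sum_congr rfl fun ω _ => (Nat.card_eq_fintype_card).symm
  have h0 : ∀ ω : orbitRel.Quotient H R,
      Nat.card (orbit H ω.out) = if ω = ω₀ then 1 else Nat.card H := by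
    intro ω
    split_ifs with hω
    · have hout : ω.out = 0 := by
        have h1 : (Quotient.mk'' ω.out : orbitRel.Quotient H R) = ω₀ := by
          rw [Quotient.out_eq']; exact hω
        have h2 : ω.out ∈ orbit H (0 : R) := by
          rw [← orbitRel_apply, ← Quotient.eq'']; exact h1
        rwa [orbit_zero, Set.mem_singleton_iff] at h2
      rw [hout, orbit_zero]
      simp [Nat.card_coe_set_eq]
    · have hout : ω.out ≠ 0 := by
        intro hc
        exact hω (by rw [← Quotient.out_eq' ω, hc])
      exact card_orbit hH hout
  rw [e1, Finset.sum_congr rfl fun ω _ => h0 ω,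
    ← Finset.add_sum_erase _ _ (Finset.mem_univ ω₀)]
  have h2 : ∀ ω ∈ Finset.univ.erase ω₀, (if ω = ω₀ then 1 else Nat.card H) = Nat.card H :=
    fun ω hω => if_neg (Finset.ne_of_mem_erase hω)
  rw [Finset.sum_congr rfl h2, Finset.sum_const, Finset.card_erase_of_mem (Finset.mem_univ _),
    Finset.card_univ, if_pos rfl, smul_eq_mul]
  simp only [Nat.card_eq_fintype_card]
  exact add_comm _ _


section FZ
variable (G H : Subgroup Rˣ)

open scoped Classical in
noncomputable def fz (x : R) (g : G) : R ⊕ orbitRel.Quotient H R :=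
  if ((g : Rˣ) : R) = 1 then Sum.inr (Quotient.mk'' x)
  else Sum.inl (Ring.inverse (1 - ((g : Rˣ) : R)) * x)

variable {G H}

lemma fz_apply_one (x : R) {g : G} (hg : g = 1) :
    fz G H x g = Sum.inr (Quotient.mk'' x) := by
  subst hg; simp [fz]

lemma fz_apply_ne (x : R) {g : G} (hg : g ≠ 1) :
    fz G H x g = Sum.inl (Ring.inverse (1 - ((g : Rˣ) : R)) * x) := by
  rw [fz, if_neg fun hc => hg (coe_one_iff.mp hc)]

lemma hsub_one_unit (hH : ∀ h ∈ H, ((h : Rˣ) : R) - 1 ≠ 0 → IsUnit (((h : Rˣ) : R) - 1))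
    {h : H} (hne : h ≠ 1) : IsUnit (((h : Rˣ) : R) - 1) := by
  simpa using gsub_unit hH (g' := 1) hne

lemma one_sub_unit (hG : ∀ g ∈ G, ((g : Rˣ) : R) - 1 ≠ 0 → IsUnit (((g : Rˣ) : R) - 1))
    {g : G} (h : g ≠ 1) : IsUnit (1 - ((g : Rˣ) : R)) := by
  have := gsub_unit hG (g := 1) (g' := g) (Ne.symm h)
  simpa using this

lemma rinv_eq_rinv_iff {u v a b : R} (hu : IsUnit u) (hv : IsUnit v) :
    Ring.inverse u * a = Ring.inverse v * b ↔ v * a = u * b := by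
  have hu1 : u * Ring.inverse u = 1 := Ring.mul_inverse_cancel _ hu
  have hv1 : v * Ring.inverse v = 1 := Ring.mul_inverse_cancel _ hv
  constructor
  · intro h; linear_combination u*v*h - v*a*hu1 + u*b*hv1
  · intro h
    linear_combination Ring.inverse u * Ring.inverse v * h - Ring.inverse u * a * hv1
      + Ring.inverse v * b * hu1

lemma coe_mul_val (g g' : G) : (((g * g' : G) : Rˣ) : R) = ((g : Rˣ) : R) * ((g' : Rˣ) : R) := by
  push_cast; ring

end FZ

section Cases
variable (hG : ∀ g ∈ G, ((g : Rˣ) : R) - 1 ≠ 0 → IsUnit (((g : Rˣ) : R) - 1))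
variable (hH : ∀ h ∈ H, ((h : Rˣ) : R) - 1 ≠ 0 → IsUnit (((h : Rˣ) : R) - 1))

lemma caseA (hG : ∀ g ∈ G, ((g : Rˣ) : R) - 1 ≠ 0 → IsUnit (((g : Rˣ) : R) - 1))
    (hH : ∀ h ∈ H, ((h : Rˣ) : R) - 1 ≠ 0 → IsUnit (((h : Rˣ) : R) - 1))
    {r : R} (hr : r ≠ 0) :
    {p : R × Additive G | fz G H (p.1 + r) (Additive.toMul p.2) = fz G H p.1 (Additive.toMul p.2)}
      = (fun h : H => ((Ring.inverse (((h : Rˣ) : R) - 1) * r, (0 : Additive G)) : R × Additive G))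
        '' {h : H | h ≠ 1} := by
  ext ⟨x, gp⟩
  set g : G := Additive.toMul gp with hgdef
  simp only [Set.mem_setOf_eq, Set.mem_image]
  constructor
  · intro hmem
    by_cases hg : g = (1 : G)
    · rw [fz_apply_one _ hg, fz_apply_one _ hg] at hmem
      have hq : (Quotient.mk'' (x + r) : orbitRel.Quotient H R) = Quotient.mk'' x :=
        Sum.inr.inj hmem
      have horb : x + r ∈ orbit H x := by rwa [Quotient.eq'', orbitRel_apply] at hq
      obtain ⟨h, hh⟩ := mem_orbit_iff.mp horb
      have hh' : ((h : Rˣ) : R) * x = x + r := hh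
      have hne : h ≠ 1 := by
        rintro rfl
        simp only [OneMemClass.coe_one, Units.val_one, one_mul] at hh'
        exact hr (by rwa [left_eq_add] at hh')
      refine ⟨h, hne, ?_⟩
      have hu := hsub_one_unit hH hne
      have hx : (((h : Rˣ) : R) - 1) * x = r := by linear_combination hh'
      have hx2 : x = Ring.inverse (((h : Rˣ) : R) - 1) * r := by
        rw [← hx, ← mul_assoc, Ring.inverse_mul_cancel _ hu, one_mul]
      refine Prod.ext hx2.symm ?_
      have : gp = Additive.ofMul (1 : G) := by
        rw [← hg, hgdef]; simp
      simpa using this.symm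
    · rw [fz_apply_ne _ hg, fz_apply_ne _ hg] at hmem
      have h1 := Sum.inl.inj hmem
      have hu := one_sub_unit hG hg
      rw [rinv_eq_rinv_iff hu hu] at h1
      have hz : (1 - ((g : Rˣ) : R)) * r = 0 := by linear_combination h1
      exact absurd (by rwa [hu.mul_right_eq_zero] at hz) hr
  · rintro ⟨h, hne, hp⟩
    have hu := hsub_one_unit hH hne
    injection hp with h1 h2
    have h1 : x = Ring.inverse (((h : Rˣ) : R) - 1) * r := h1.symm
    have hg : g = 1 := by rw [hgdef, ← h2]; simp
    rw [fz_apply_one _ hg, fz_apply_one _ hg]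
    congr 1
    rw [Quotient.eq'', orbitRel_apply]
    refine mem_orbit_iff.mpr ⟨h, ?_⟩
    show ((h : Rˣ) : R) * x = x + r
    have hc : (((h : Rˣ) : R) - 1) * Ring.inverse (((h : Rˣ) : R) - 1) = 1 :=
      Ring.mul_inverse_cancel _ hu
    rw [h1]
    linear_combination r * hc

lemma caseB (hG : ∀ g ∈ G, ((g : Rˣ) : R) - 1 ≠ 0 → IsUnit (((g : Rˣ) : R) - 1))
    {r : R} {g₀ : G} (hg₀ : g₀ ≠ 1) :
    {p : R × Additive G |
        fz G H (p.1 + r) (Additive.toMul p.2 * g₀) = fz G H p.1 (Additive.toMul p.2)}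
      = (fun g : G => ((Ring.inverse (((g : Rˣ) : R) * (1 - ((g₀ : Rˣ) : R)))
            * ((1 - ((g : Rˣ) : R)) * r), Additive.ofMul g) : R × Additive G))
        '' {g : G | g ≠ 1 ∧ g ≠ g₀⁻¹} := by
  have hw : ∀ g : G, IsUnit (((g : Rˣ) : R) * (1 - ((g₀ : Rˣ) : R))) :=
    fun g => (Units.isUnit (g : Rˣ)).mul (one_sub_unit hG hg₀)
  ext ⟨x, gp⟩
  set g : G := Additive.toMul gp with hgdef
  simp only [Set.mem_setOf_eq, Set.mem_image]
  constructor
  · intro hmem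
    by_cases hg : g = (1 : G)
    · have hgg : g * g₀ ≠ 1 := by rw [hg, one_mul]; exact hg₀
      rw [fz_apply_ne _ hgg, fz_apply_one _ hg] at hmem
      exact absurd hmem (by simp)
    · by_cases hgg : g * g₀ = 1
      · rw [fz_apply_one _ hgg, fz_apply_ne _ hg] at hmem
        exact absurd hmem (by simp)
      · rw [fz_apply_ne _ hgg, fz_apply_ne _ hg] at hmem
        have h1 := Sum.inl.inj hmem
        have hu := one_sub_unit hG hgg
        have hv := one_sub_unit hG hg
        rw [rinv_eq_rinv_iff hu hv] at h1
        -- h1 : (1 - g) * (x + r) = (1 - g*g₀) * x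
        have hcm : (((g * g₀ : G) : Rˣ) : R) = ((g : Rˣ) : R) * ((g₀ : Rˣ) : R) :=
          coe_mul_val g g₀
        rw [hcm] at h1
        have hx : (((g : Rˣ) : R) * (1 - ((g₀ : Rˣ) : R))) * x = (1 - ((g : Rˣ) : R)) * r := by
          linear_combination -h1
        have hx2 : x = Ring.inverse (((g : Rˣ) : R) * (1 - ((g₀ : Rˣ) : R)))
            * ((1 - ((g : Rˣ) : R)) * r) := by
          rw [← hx, ← mul_assoc, Ring.inverse_mul_cancel _ (hw g), one_mul]
        refine ⟨g, ⟨hg, fun hc => hgg ?_⟩, ?_⟩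
        · rw [hc, inv_mul_cancel]
        · refine Prod.ext hx2.symm ?_
          rw [hgdef]; simp
  · rintro ⟨g', ⟨hg1, hginv⟩, hp⟩
    injection hp with h1 h2
    have hgg' : g = g' := by rw [hgdef, ← h2]; simp
    subst hgg'
    have hgg : g * g₀ ≠ 1 := fun hc => hginv (by rw [← eq_inv_of_mul_eq_one_left hc])
    rw [fz_apply_ne _ hgg, fz_apply_ne _ hg1]
    congr 1
    have hu := one_sub_unit hG hgg
    have hv := one_sub_unit hG hg1
    rw [rinv_eq_rinv_iff hu hv]
    have hcm : (((g * g₀ : G) : Rˣ) : R) = ((g : Rˣ) : R) * ((g₀ : Rˣ) : R) :=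
      coe_mul_val g g₀
    rw [hcm, ← h1]
    have hc : (((g : Rˣ) : R) * (1 - ((g₀ : Rˣ) : R)))
        * Ring.inverse (((g : Rˣ) : R) * (1 - ((g₀ : Rˣ) : R))) = 1 :=
      Ring.mul_inverse_cancel _ (hw g)
    linear_combination (-((1 - ((g : Rˣ) : R)) * r)) * hc

lemma fz_surj (hG : ∀ g ∈ G, ((g : Rˣ) : R) - 1 ≠ 0 → IsUnit (((g : Rˣ) : R) - 1))
    (hex : ∃ g : G, g ≠ 1) :
    Function.Surjective (fun p : R × Additive G => fz G H p.1 (Additive.toMul p.2)) := by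
  rintro (y | q)
  · obtain ⟨g₁, hg₁⟩ := hex
    refine ⟨((1 - ((g₁ : Rˣ) : R)) * y, Additive.ofMul g₁), ?_⟩
    show fz G H _ g₁ = _
    rw [fz_apply_ne _ hg₁]
    congr 1
    rw [← mul_assoc, Ring.inverse_mul_cancel _ (one_sub_unit hG hg₁), one_mul]
  · refine ⟨(q.out, (0 : Additive G)), ?_⟩
    show fz G H _ (1 : G) = _
    rw [fz_apply_one _ rfl, Quotient.out_eq']

end Cases

lemma ncard_ne {α : Type*} [Finite α] (a : α) : {x : α | x ≠ a}.ncard = Nat.card α - 1 := by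
  have h : {x : α | x ≠ a} = Set.univ \ {a} := by ext; simp
  rw [h, Set.ncard_diff (Set.subset_univ _), Set.ncard_univ, Set.ncard_singleton]

lemma ncard_ne_two {α : Type*} [Finite α] {a b : α} (hab : a ≠ b) :
    {x : α | x ≠ a ∧ x ≠ b}.ncard = Nat.card α - 2 := by
  have h : {x : α | x ≠ a ∧ x ≠ b} = Set.univ \ {a, b} := by ext; simp
  rw [h, Set.ncard_diff (Set.subset_univ _), Set.ncard_univ, Set.ncard_pair hab]

lemma arith (e n q : ℕ) (he : 2 ≤ e) (hq : 1 ≤ q) (hn : n = (q-1)*(e-1)+1) :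
    (e*n-1)/(e-1)+1 = e*(q-1)+2 ∧ n + q = e*(q-1)+2 := by
  obtain ⟨e', rfl⟩ : ∃ e', e = e'+2 := ⟨e-2, by omega⟩
  obtain ⟨k, rfl⟩ : ∃ k, q = k+1 := ⟨q-1, by omega⟩
  simp only [show e'+2-1 = e'+1 from rfl, Nat.add_sub_cancel] at hn ⊢
  subst hn
  constructor
  · have h2 : (e'+2) * (k*(e'+1)+1) = (e'+1)*((e'+2)*k+1)+1 := by ring
    have h1 : (e'+2) * (k*(e'+1)+1) - 1 = (e'+1) * ((e'+2)*k+1) := by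
      rw [h2, Nat.add_sub_cancel]
    have h3 : (e' + 2) - 1 = e' + 1 := rfl
    rw [h1, Nat.mul_div_cancel_left _ (by omega : 0 < e'+1)]
  · ring
end


/-- Theorem 1: from subgroups `G`, `H` of `Rˣ` with the zero-difference conditions
and `|H| = |G| - 1`, one obtains an `(en, (en-1)/(e-1)+1, e-2)` ZDB function on
`(R,+) × (G,×)`. -/
theorem zdb_product_construction {R : Type*} [CommRing R] [Fintype R]
    (G H : Subgroup Rˣ)
    (hG : ∀ g ∈ G, ((g : Rˣ) : R) - 1 ≠ 0 → IsUnit (((g : Rˣ) : R) - 1))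
    (hH : ∀ h ∈ H, ((h : Rˣ) : R) - 1 ≠ 0 → IsUnit (((h : Rˣ) : R) - 1))
    (hcard : Nat.card H = Nat.card G - 1) :
    ∃ f : R × Additive G →
        ZMod ((Nat.card G * Nat.card R - 1) / (Nat.card G - 1) + 1),
      IsZDB f (Nat.card G * Nat.card R)
        ((Nat.card G * Nat.card R - 1) / (Nat.card G - 1) + 1)
        (Nat.card G - 2) := by
  classical
  haveI : Nonempty (MulAction.orbitRel.Quotient H R) := ⟨Quotient.mk'' 0⟩
  have hHpos : 0 < Nat.card H := Nat.card_pos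
  have hGpos : 0 < Nat.card G := Nat.card_pos
  have he2 : 2 ≤ Nat.card G := by omega
  obtain ⟨g₁, hg₁⟩ : ∃ g : G, g ≠ 1 := by
    haveI : Nontrivial G := by
      rw [← Finite.one_lt_card_iff_nontrivial]
      omega
    exact exists_ne 1
  have hn : Nat.card R
      = (Nat.card (MulAction.orbitRel.Quotient H R) - 1) * (Nat.card G - 1) + 1 := by
    rw [cardR_eq hH, hcard]
  have hq1 : 1 ≤ Nat.card (MulAction.orbitRel.Quotient H R) := Nat.card_pos
  obtain ⟨hm1, hm2⟩ := arith (Nat.card G) (Nat.card R)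
    (Nat.card (MulAction.orbitRel.Quotient H R)) he2 hq1 hn
  have hcardB : Nat.card (R ⊕ MulAction.orbitRel.Quotient H R)
      = (Nat.card G * Nat.card R - 1) / (Nat.card G - 1) + 1 := by
    rw [Nat.card_sum, hm1]
    exact hm2
  haveI : Fintype (MulAction.orbitRel.Quotient H R) := Fintype.ofFinite _
  have hzcard : Fintype.card (R ⊕ MulAction.orbitRel.Quotient H R)
      = Fintype.card (ZMod ((Nat.card G * Nat.card R - 1) / (Nat.card G - 1) + 1)) := by
    rw [← Nat.card_eq_fintype_card, ← Nat.card_eq_fintype_card, hcardB, Nat.card_zmod]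
  let eqv := Fintype.equivOfCardEq hzcard
  set F : R × Additive G → R ⊕ MulAction.orbitRel.Quotient H R :=
    fun p => fz G H p.1 (Additive.toMul p.2) with hF
  refine ⟨fun p => eqv (F p), ?_, ?_, ?_⟩
  · rw [Nat.card_prod]
    have h := Nat.card_congr (Additive.toMul (α := G))
    rw [h, mul_comm]
  · have hFsurj := fz_surj (H := H) hG ⟨g₁, hg₁⟩
    have hr : Set.range (fun p => eqv (F p)) = Set.univ := by
      have h : Set.range (fun p => eqv (F p)) = eqv '' Set.range F := by
        rw [← Set.range_comp]; rfl
      rw [h, hFsurj.range_eq, Set.image_univ, Equiv.range_eq_univ]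
    rw [hr, Set.ncard_univ, Nat.card_zmod]
  · rintro ⟨r, ga⟩ ha
    show Set.ncard {x : R × Additive G | eqv (F (x + (r, ga))) = eqv (F x)} = _
    have hset : {x : R × Additive G | eqv (F (x + (r, ga))) = eqv (F x)}
        = {p : R × Additive G | F (p + (r, ga)) = F p} := by
      ext p; simp [eqv.injective.eq_iff]
    rw [hset]
    by_cases hga : Additive.toMul ga = (1 : G)
    · have hr0 : r ≠ 0 := by
        rintro rfl
        apply ha
        have hga0 : ga = 0 := by simpa using hga
        rw [hga0]
        rfl
      have hEq : {p : R × Additive G | F (p + (r, ga)) = F p}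
          = {p : R × Additive G |
              fz G H (p.1 + r) (Additive.toMul p.2) = fz G H p.1 (Additive.toMul p.2)} := by
        ext p
        simp only [Set.mem_setOf_eq, hF]
        have h2 : Additive.toMul ((p + (r, ga)).2) = Additive.toMul p.2 := by
          show Additive.toMul p.2 * Additive.toMul ga = Additive.toMul p.2
          rw [hga, mul_one]
        rw [show (p + (r, ga)).1 = p.1 + r from rfl, h2]
      rw [hEq, caseA hG hH hr0]
      have hinj : Set.InjOn
          (fun h : H => ((Ring.inverse (((h : Rˣ) : R) - 1) * r, (0 : Additive G))
            : R × Additive G)) {h : H | h ≠ 1} := by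
        intro h hh h' hh' heq
        simp only [Set.mem_setOf_eq] at hh hh'
        injection heq with h1 _
        by_contra hne
        have hu := hsub_one_unit hH hh
        have hu' := hsub_one_unit hH hh'
        rw [rinv_eq_rinv_iff hu hu'] at h1
        have hz : ((((h' : Rˣ) : R)) - (((h : Rˣ) : R))) * r = 0 := by linear_combination h1
        have hun := gsub_unit hH (show h' ≠ h from fun hc => hne hc.symm)
        exact hr0 (by rwa [hun.mul_right_eq_zero] at hz)
      rw [Set.ncard_image_of_injOn hinj, ncard_ne (1 : H), hcard]
      omega
    · set g₀ : G := Additive.toMul ga with hg₀def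
      have hga' : g₀ ≠ (1 : G) := hga
      have hEq : {p : R × Additive G | F (p + (r, ga)) = F p}
          = {p : R × Additive G |
              fz G H (p.1 + r) (Additive.toMul p.2 * g₀)
                = fz G H p.1 (Additive.toMul p.2)} := by
        ext p
        simp only [Set.mem_setOf_eq, hF]
        rw [show (p + (r, ga)).1 = p.1 + r from rfl]
        rfl
      rw [hEq, caseB hG hga']
      have hinj : Set.InjOn
          (fun g : G => ((Ring.inverse (((g : Rˣ) : R) * (1 - ((g₀ : Rˣ) : R)))
              * ((1 - ((g : Rˣ) : R)) * r), Additive.ofMul g) : R × Additive G))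
          {g : G | g ≠ 1 ∧ g ≠ g₀⁻¹} := by
        intro g hg g' hg' heq
        have h2 := congrArg Prod.snd heq
        simpa using h2
      rw [Set.ncard_image_of_injOn hinj]
      have h1ne : (1 : G) ≠ g₀⁻¹ := by
        intro hc
        exact hga' (by rw [← inv_inv g₀, ← hc, inv_one])
      rw [ncard_ne_two h1ne]
end

section
/- Let n = p_1^{r_1}···p_k^{r_k} with 2 < p_1 < ··· < p_k odd primes and r_i ≥ 1. For any positive integer e with e(e−1) dividing gcd(p_1−1, ..., p_k−1), there exists an (en, (en−1)/(e−1) + 1, e−2) zero-difference balanced function from (Z_{en}, +) to (Z_{(en−1)/(e−1)+1}, +). -/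
/-!
Write `e = m + 1`. Every prime `q ∣ n` has `e (e - 1) ∣ q - 1`, so `e` is prime to `n` and
`ℤ/n` contains a unit `u` with `u ^ m = 1` such that `u ^ j - 1` is a unit for `0 < j < m`:
lift an element of order `m` of `(ℤ/p)ˣ` to `ℤ/p^r` and raise it to the power `p ^ r`, which
kills the kernel of reduction mod `p` but keeps the order mod `p`; then glue by the Chinese
remainder theorem. Consequently all differences `u ^ i - u ^ j`, `i ≠ j < m`, are units.

Through `ℤ/en ≅ ℤ/e × ℤ/n`, partition the group into `{0}`, the sets `{0} × O` for the nonzero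
`⟨u⟩`-orbits `O`, and the sets `{(t, u ^ (1 - t) w) | t ≠ 0}` for `w ∈ ℤ/n`; every block but
`{0}` has `m` elements, which gives the number of blocks. A shift by `(0, y)`, `y ≠ 0`, keeps
`(0, x)` in its block iff `x + y = u ^ j x` for some `0 < j < m`, which has one solution per `j`,
and never keeps `(t, x)` with `t ≠ 0`. A shift by `(c, y)`, `c ≠ 0`, keeps `(t, x)` in its block
for exactly one `x` when `t ∉ {0, -c}` and for none otherwise. Both counts are `m - 1 = e - 2`.
-/

open MulAction

lemma ncard_range_eq_of_ncard_preimage {A B : Type*} [Finite A] {F : A → B} {a₀ : A} {k : ℕ}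
    (hk : 0 < k) (h₀ : F ⁻¹' {F a₀} = {a₀}) (h : ∀ a ≠ a₀, (F ⁻¹' {F a}).ncard = k) :
    (Set.range F).ncard = (Nat.card A - 1) / k + 1 := by
  classical
  have := Fintype.ofFinite A
  have hfiber (a : A) :
      (Finset.univ.filter fun a' => F a' = F a).card = (F ⁻¹' {F a}).ncard := by
    rw [← Set.ncard_coe_finset]; congr 1; ext; simp
  have hsum := Finset.card_eq_sum_card_image F Finset.univ
  rw [← Finset.add_sum_erase _ _ (Finset.mem_image_of_mem F (Finset.mem_univ a₀)), hfiber, h₀,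
    Set.ncard_singleton, Finset.sum_congr rfl (g := fun _ => k), Finset.sum_const, smul_eq_mul,
    Finset.card_erase_of_mem (Finset.mem_image_of_mem F (Finset.mem_univ a₀))] at hsum
  · rw [Set.ncard_eq_toFinset_card', Set.toFinset_range, Nat.card_eq_fintype_card,
      ← Finset.card_univ, hsum, Nat.add_sub_cancel_left, Nat.mul_div_cancel _ hk,
      Nat.sub_add_cancel]
    exact Finset.card_pos.2 ⟨_, Finset.mem_image_of_mem F (Finset.mem_univ a₀)⟩
  · intro b hb
    obtain ⟨hb₀, hb⟩ := Finset.mem_erase.1 hb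
    obtain ⟨a, -, rfl⟩ := Finset.mem_image.1 hb
    rw [hfiber, h a (by rintro rfl; exact hb₀ rfl)]

namespace IsZDB

variable {A A' B : Type*} [AddGroup A] [AddGroup A'] {F : A → B} {N k lam : ℕ}

lemma comp_addEquiv (hF : IsZDB F N k lam) (φ : A' ≃+ A) : IsZDB (F ∘ φ) N k lam := by
  refine ⟨(Nat.card_congr φ.toEquiv).trans hF.1, by rw [φ.surjective.range_comp]; exact hF.2.1,
    fun a ha => ?_⟩
  have : {x | (F ∘ φ) (x + a) = (F ∘ φ) x} = φ ⁻¹' {P | F (P + φ a) = F P} := by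
    ext x; simp
  rw [this, Set.ncard_preimage_of_injective_subset_range φ.injective
    (by simp [φ.surjective.range_eq])]
  exact hF.2.2 _ (by simpa using ha)

lemma exists_zmod [Finite A] (hF : IsZDB F N k lam) : ∃ f : A → ZMod k, IsZDB f N k lam := by
  have : NeZero k :=
    ⟨hF.2.1 ▸ ((Set.ncard_pos (Set.finite_range F)).2 (Set.range_nonempty F)).ne'⟩
  obtain ⟨ι⟩ := Finite.card_eq.1
    ((hF.2.1 : Nat.card (Set.range F) = k).trans (Nat.card_zmod k).symm)
  refine ⟨ι ∘ Set.rangeFactorization F, hF.1, ?_, fun a ha => ?_⟩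
  · rw [(ι.surjective.comp Set.rangeFactorization_surjective).range_eq, Set.ncard_univ,
      Nat.card_zmod]
  · simpa [ι.injective.eq_iff, Set.rangeFactorization, Subtype.ext_iff] using hF.2.2 a ha

end IsZDB

section StrongPrimitiveRoot

variable {R S : Type*} [CommRing R] [CommRing S]

/-- Over a field and for `0 < m`, this is `IsPrimitiveRoot (u : R) m`. -/
def IsStrongPrimitiveRoot (u : Rˣ) (m : ℕ) : Prop :=
  u ^ m = 1 ∧ ∀ j, 0 < j → j < m → IsUnit ((u : R) ^ j - 1)

namespace IsStrongPrimitiveRoot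

variable {u : Rˣ} {m : ℕ}

lemma isUnit_pow_sub_pow (h : IsStrongPrimitiveRoot u m) {i j : ℕ} (hi : i < m) (hj : j < m)
    (hij : i ≠ j) : IsUnit ((u : R) ^ i - (u : R) ^ j) := by
  wlog hji : j < i generalizing i j
  · rw [← neg_sub]
    exact (this hj hi hij.symm (by omega)).neg
  have hfactor : (u : R) ^ i - (u : R) ^ j = (u : R) ^ j * ((u : R) ^ (i - j) - 1) := by
    rw [mul_sub, ← pow_add, Nat.add_sub_cancel' hji.le, mul_one]
  rw [hfactor]
  exact (u.isUnit.pow j).mul (h.2 _ (by omega) (by omega))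

lemma map (h : IsStrongPrimitiveRoot u m) (f : R →+* S) :
    IsStrongPrimitiveRoot (Units.map (f : R →* S) u) m :=
  ⟨by rw [← map_pow, h.1, map_one], fun j hj hjm => by simpa using (h.2 j hj hjm).map f⟩

lemma prod {v : Sˣ} (hu : IsStrongPrimitiveRoot u m) (hv : IsStrongPrimitiveRoot v m) :
    IsStrongPrimitiveRoot (MulEquiv.prodUnits.symm (u, v)) m :=
  ⟨by rw [← map_pow, Prod.pow_mk, hu.1, hv.1, Prod.mk_one_one, map_one],
    fun j hj hjm => Prod.isUnit_iff.2 ⟨hu.2 j hj hjm, hv.2 j hj hjm⟩⟩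

lemma mem_orbit_iff (h : IsStrongPrimitiveRoot u m) (hm : 0 < m) {x y : R} :
    y ∈ orbit (Subgroup.zpowers u) x ↔ ∃ j < m, (u : R) ^ j * x = y := by
  rw [MulAction.mem_orbit_iff]
  constructor
  · rintro ⟨⟨g, hg⟩, rfl⟩
    obtain ⟨k, rfl⟩ := Subgroup.mem_zpowers_iff.1 hg
    have hk := Int.emod_nonneg k (by omega : (m : ℤ) ≠ 0)
    have hkm := Int.emod_lt_of_pos k (by omega : (0 : ℤ) < m)
    obtain ⟨l, hl⟩ := Int.eq_ofNat_of_zero_le hk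
    refine ⟨l, by omega, ?_⟩
    change _ = ((u ^ k : Rˣ) : R) * x
    rw [zpow_eq_zpow_emod' k h.1, hl, zpow_natCast, Units.val_pow_eq_pow_val]
  · rintro ⟨j, -, rfl⟩
    exact ⟨⟨u ^ j, j, zpow_natCast u j⟩, rfl⟩

lemma ncard_orbit (h : IsStrongPrimitiveRoot u m) (hm : 0 < m) {x : R} (hx : x ≠ 0) :
    (orbit (Subgroup.zpowers u) x).ncard = m := by
  have horbit : orbit (Subgroup.zpowers u) x = (fun j => (u : R) ^ j * x) '' Set.Iio m := by
    ext y
    simp [h.mem_orbit_iff hm]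
  rw [horbit, Set.InjOn.ncard_image, Set.ncard_Iio_nat]
  intro i hi j hj hij
  by_contra hne
  exact hx ((h.isUnit_pow_sub_pow hi hj hne).mul_right_eq_zero.1
    (by rw [sub_mul]; exact sub_eq_zero.2 hij))

lemma ncard_setOf_add_mem_orbit (h : IsStrongPrimitiveRoot u m) (hm : 0 < m) {y : R}
    (hy : y ≠ 0) :
    {x | x + y ∈ orbit (Subgroup.zpowers u) x}.ncard = m - 1 := by
  have hset : {x | x + y ∈ orbit (Subgroup.zpowers u) x} =
      (fun j => Ring.inverse ((u : R) ^ j - 1) * y) '' Set.Ioo 0 m := by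
    ext x
    simp only [Set.mem_ofPred_eq, h.mem_orbit_iff hm, Set.mem_image, Set.mem_Ioo]
    constructor
    · rintro ⟨j, hj, hx⟩
      have hj0 : 0 < j := Nat.pos_of_ne_zero fun hj0 => hy (by simpa [hj0] using hx)
      refine ⟨j, ⟨hj0, hj⟩, (Ring.inverse_mul_eq_iff_eq_mul _ _ _ (h.2 j hj0 hj)).2 ?_⟩
      linear_combination (-1 : R) * hx
    · rintro ⟨j, ⟨hj0, hj⟩, rfl⟩
      refine ⟨j, hj, ?_⟩
      linear_combination Ring.mul_inverse_cancel_left _ y (h.2 j hj0 hj)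
  rw [hset, Set.InjOn.ncard_image, Set.ncard_Ioo_nat, Nat.sub_zero]
  intro i ⟨hi0, hi⟩ j ⟨hj0, hj⟩ hij
  dsimp only at hij
  by_contra hne
  set x := Ring.inverse ((u : R) ^ i - 1) * y
  have hxi : ((u : R) ^ i - 1) * x = y := Ring.mul_inverse_cancel_left _ y (h.2 i hi0 hi)
  have hxj : ((u : R) ^ j - 1) * x = y := by
    rw [hij]; exact Ring.mul_inverse_cancel_left _ y (h.2 j hj0 hj)
  have hx : x = 0 := (h.isUnit_pow_sub_pow hi hj hne).mul_right_eq_zero.1 (by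
    linear_combination hxi - hxj)
  exact hy (by rw [← hxi, hx, mul_zero])

end IsStrongPrimitiveRoot

end StrongPrimitiveRoot

namespace ZMod

lemma val_sub_one_lt {m : ℕ} {s : ZMod (m + 1)} (hs : s ≠ 0) : s.val - 1 < m := by
  have := val_lt s
  have := (val_ne_zero s).2 hs
  omega

lemma val_sub_one_injOn (m : ℕ) : Set.InjOn (fun s : ZMod (m + 1) => s.val - 1) {0}ᶜ := by
  intro s hs t ht hst
  have := (val_ne_zero s).2 hs
  have := (val_ne_zero t).2 ht
  exact val_injective _ (show s.val = t.val by dsimp only at hst; omega)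

section PrimePow

variable {p r : ℕ} [Fact p.Prime]

lemma pow_prime_pow_eq_one_of_castHom_eq_one (hr : r ≠ 0) {y : ZMod (p ^ r)}
    (hy : castHom (dvd_pow_self p hr) (ZMod p) y = 1) : y ^ p ^ r = 1 := by
  have hp : (p : ZMod (p ^ r)) ∣ y - 1 := by
    obtain ⟨c, hc⟩ : p ∣ (y - 1).val := by
      rw [← natCast_eq_zero_iff, natCast_val]
      change castHom (dvd_pow_self p hr) (ZMod p) (y - 1) = 0
      rw [map_sub, hy, map_one, sub_self]
    exact ⟨c, by rw [← natCast_zmod_val (y - 1), hc, Nat.cast_mul]⟩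
  have hzero : ((p ^ (r + 1) : ℕ) : ZMod (p ^ r)) = 0 :=
    (natCast_eq_zero_iff _ _).2 (pow_dvd_pow p r.le_succ)
  have := dvd_sub_pow_of_dvd_sub hp r
  rwa [one_pow, ← Nat.cast_pow, hzero, zero_dvd_iff, sub_eq_zero] at this

lemma isUnit_of_castHom_ne_zero (hr : r ≠ 0) {y : ZMod (p ^ r)}
    (hy : castHom (dvd_pow_self p hr) (ZMod p) y ≠ 0) : IsUnit y := by
  have hp := (Fact.out : p.Prime).two_le
  refine IsUnit.of_pow_eq_one (n := (p - 1) * p ^ r) ?_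
    (Nat.mul_ne_zero (by omega) (pow_ne_zero r (by omega)))
  rw [pow_mul]
  apply pow_prime_pow_eq_one_of_castHom_eq_one hr
  rw [map_pow, pow_card_sub_one_eq_one hy]

lemma exists_isStrongPrimitiveRoot_primePow {m : ℕ} (hr : r ≠ 0) (hm : m ∣ p - 1) :
    ∃ u : (ZMod (p ^ r))ˣ, IsStrongPrimitiveRoot u m := by
  have hp := (Fact.out : p.Prime)
  obtain ⟨k, hk⟩ := hm
  have hm0 : m ≠ 0 := by rintro rfl; have := hp.two_le; omega
  have hk0 : k ≠ 0 := by rintro rfl; have := hp.two_le; omega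
  obtain ⟨z, hz⟩ := IsCyclic.exists_ofOrder_eq_natCard (α := (ZMod p)ˣ)
  rw [Nat.card_eq_fintype_card, card_units, hk] at hz
  have hv : orderOf ((z : ZMod p) ^ k) = m := by
    rw [← Units.val_pow_eq_pow_val, orderOf_units, orderOf_pow_of_dvd hk0 (hz ▸ dvd_mul_left k m),
      hz, Nat.mul_div_cancel _ (Nat.pos_of_ne_zero hk0)]
  obtain ⟨w, hw⟩ := castHom_surjective (dvd_pow_self p hr) ((z : ZMod p) ^ k)
  have hg : (w ^ p ^ r) ^ m = 1 := by
    rw [← pow_mul, mul_comm, pow_mul]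
    apply pow_prime_pow_eq_one_of_castHom_eq_one hr
    rw [map_pow, hw, ← hv, pow_orderOf_eq_one]
  refine ⟨Units.ofPowEqOne _ m hg hm0, Units.pow_ofPowEqOne hg hm0, fun j hj hjm => ?_⟩
  apply isUnit_of_castHom_ne_zero hr
  rw [Units.val_ofPowEqOne, map_sub, map_pow, map_pow, hw, map_one, sub_ne_zero, ← pow_mul,
    Ne, ← orderOf_dvd_iff_pow_eq_one, hv]
  intro hdvd
  have hcop : m.Coprime (p ^ r) :=
    (Nat.Coprime.coprime_dvd_left (Dvd.intro k hk.symm) ((Nat.coprime_self_sub_left hp.one_le).2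
      (Nat.coprime_one_left p))).pow_right r
  exact absurd (Nat.le_of_dvd hj (hcop.dvd_of_dvd_mul_left hdvd)) (by omega)

end PrimePow

end ZMod

lemma exists_isStrongPrimitiveRoot_zmod {n m : ℕ} (hn : n ≠ 0)
    (h : ∀ q, q.Prime → q ∣ n → m ∣ q - 1) : ∃ u : (ZMod n)ˣ, IsStrongPrimitiveRoot u m := by
  induction n using Nat.recOnPosPrimePosCoprime with
  | prime_pow p r hp hr =>
    have := Fact.mk hp
    exact ZMod.exists_isStrongPrimitiveRoot_primePow hr.ne' (h p hp (dvd_pow_self p hr.ne'))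
  | zero => exact absurd rfl hn
  | one => exact ⟨1, one_pow m, fun j _ _ => isUnit_of_subsingleton _⟩
  | coprime a b _ _ hab iha ihb =>
    obtain ⟨u, hu⟩ := iha (by omega) fun q hq hqa => h q hq (hqa.mul_right b)
    obtain ⟨v, hv⟩ := ihb (by omega) fun q hq hqb => h q hq (hqb.mul_left a)
    exact ⟨_, (hu.prod hv).map (ZMod.chineseRemainder hab).symm.toRingHom⟩

section Blocks

variable {R : Type*} [CommRing R] {u : Rˣ} {m : ℕ}

def blockIndex (u : Rˣ) (m : ℕ) (P : ZMod (m + 1) × R) : Set R ⊕ R :=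
  if P.1 = 0 then .inl (orbit (Subgroup.zpowers u) P.2) else .inr ((u : R) ^ (P.1.val - 1) * P.2)

lemma blockIndex_preimage_zero : blockIndex u m ⁻¹' {blockIndex u m 0} = {0} := by
  have horbit (x : R) : x ∈ orbit (Subgroup.zpowers u) 0 ↔ x = 0 := by
    simp [MulAction.mem_orbit_iff, eq_comm]
  ext ⟨t, x⟩
  by_cases ht : t = 0 <;> simp [blockIndex, ht, orbit_eq_iff, horbit]

lemma ncard_blockIndex_preimage (h : IsStrongPrimitiveRoot u m) (hm : 0 < m)
    {P : ZMod (m + 1) × R} (hP : P ≠ 0) :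
    (blockIndex u m ⁻¹' {blockIndex u m P}).ncard = m := by
  obtain ⟨t, x⟩ := P
  by_cases ht : t = 0
  · subst ht
    have hx : x ≠ 0 := fun hx => hP (by rw [hx]; rfl)
    have hfiber : blockIndex u m ⁻¹' {blockIndex u m (0, x)} =
        Prod.mk 0 '' orbit (Subgroup.zpowers u) x := by
      ext ⟨s, x'⟩
      by_cases hs : s = 0
      · simp [blockIndex, hs, orbit_eq_iff]
      · simp [blockIndex, hs, Ne.symm hs]
    rw [hfiber, Set.ncard_image_of_injective _ (Prod.mk_right_injective 0), h.ncard_orbit hm hx]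
  · set w := (u : R) ^ (t.val - 1) * x with hw
    have hfiber : blockIndex u m ⁻¹' {blockIndex u m (t, x)} =
        (fun s => (s, ((u ^ (s.val - 1))⁻¹ : Rˣ) * w)) '' {0}ᶜ := by
      ext ⟨s, x'⟩
      by_cases hs : s = 0
      · simp [blockIndex, hs, ht]
      · simp only [blockIndex, if_neg hs, if_neg ht, Set.mem_preimage, Set.mem_singleton_iff,
          Set.mem_image, Set.mem_compl_singleton_iff, Prod.mk.injEq, Sum.inr.injEq]
        constructor
        · intro hx
          refine ⟨s, hs, rfl, ?_⟩
          rw [hw, ← hx, ← Units.val_pow_eq_pow_val, Units.inv_mul_cancel_left]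
        · rintro ⟨_, -, rfl, rfl⟩
          rw [← Units.val_pow_eq_pow_val, Units.mul_inv_cancel_left]
    rw [hfiber, Set.ncard_image_of_injective _ (fun a b hab => (Prod.ext_iff.1 hab).1),
      Set.ncard_compl, Set.ncard_singleton, Nat.card_zmod, Nat.add_sub_cancel]

lemma ncard_blockIndex_add_eq_of_fst_eq_zero (h : IsStrongPrimitiveRoot u m) (hm : 0 < m)
    {y : R} (hy : y ≠ 0) :
    {P | blockIndex u m (P + (0, y)) = blockIndex u m P}.ncard = m - 1 := by
  have hset : {P | blockIndex u m (P + (0, y)) = blockIndex u m P} =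
      Prod.mk 0 '' {x | x + y ∈ orbit (Subgroup.zpowers u) x} := by
    ext ⟨t, x⟩
    by_cases ht : t = 0
    · simp [blockIndex, ht, orbit_eq_iff]
    · simp only [blockIndex, Set.mem_ofPred_eq, Prod.mk_add_mk, add_zero, if_neg ht,
        Sum.inr.injEq, Set.mem_image, Prod.mk.injEq, Ne.symm ht, false_and, and_false,
        exists_false, iff_false]
      intro hxy
      exact hy (by simpa using (u.isUnit.pow _).mul_left_cancel hxy)
  rw [hset, Set.ncard_image_of_injective _ (Prod.mk_right_injective 0),
    h.ncard_setOf_add_mem_orbit hm hy]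

lemma ncard_blockIndex_add_eq_of_fst_ne_zero (h : IsStrongPrimitiveRoot u m)
    {c : ZMod (m + 1)} (hc : c ≠ 0) (y : R) :
    {P | blockIndex u m (P + (c, y)) = blockIndex u m P}.ncard = m - 1 := by
  have hset : {P | blockIndex u m (P + (c, y)) = blockIndex u m P} =
      (fun t => (t, Ring.inverse ((u : R) ^ (t.val - 1) - (u : R) ^ ((t + c).val - 1)) *
        ((u : R) ^ ((t + c).val - 1) * y))) '' {0, -c}ᶜ := by
    ext ⟨t, x⟩
    by_cases ht : t = 0
    · simp [blockIndex, ht, hc]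
    by_cases htc : t + c = 0
    · simp [blockIndex, hc, eq_neg_of_add_eq_zero_left htc]
    have htc' : t ≠ -c := fun h => htc (by rw [h, neg_add_cancel])
    have hne : t.val - 1 ≠ (t + c).val - 1 := fun hval =>
      hc (by simpa using ZMod.val_sub_one_injOn m ht htc hval)
    have hunit := h.isUnit_pow_sub_pow (ZMod.val_sub_one_lt ht) (ZMod.val_sub_one_lt htc) hne
    simp only [blockIndex, Set.mem_ofPred_eq, Prod.mk_add_mk, if_neg ht, if_neg htc,
      Sum.inr.injEq, Set.mem_image, Set.mem_compl_iff, Set.mem_insert_iff,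
      Set.mem_singleton_iff, Prod.mk.injEq]
    constructor
    · intro hx
      refine ⟨t, by simp [ht, htc'], rfl, ?_⟩
      rw [Ring.inverse_mul_eq_iff_eq_mul _ _ _ hunit]
      linear_combination hx
    · rintro ⟨_, -, rfl, hx⟩
      rw [Ring.inverse_mul_eq_iff_eq_mul _ _ _ hunit] at hx
      linear_combination hx
  have hc' : (0 : ZMod (m + 1)) ≠ -c := by simpa [eq_comm] using hc
  rw [hset, Set.ncard_image_of_injective _ (fun a b hab => (Prod.ext_iff.1 hab).1),
    Set.ncard_compl, Set.ncard_pair hc', Nat.card_zmod]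
  omega

theorem isZDB_blockIndex [Finite R] (h : IsStrongPrimitiveRoot u m) (hm : 0 < m) :
    IsZDB (blockIndex u m) ((m + 1) * Nat.card R) (((m + 1) * Nat.card R - 1) / m + 1) (m - 1) := by
  have hcard : Nat.card (ZMod (m + 1) × R) = (m + 1) * Nat.card R := by
    rw [Nat.card_prod, Nat.card_zmod]
  refine ⟨hcard, ?_, ?_⟩
  · rw [← hcard]
    exact ncard_range_eq_of_ncard_preimage hm blockIndex_preimage_zero
      fun P hP => ncard_blockIndex_preimage h hm hP
  · rintro ⟨c, y⟩ ha
    by_cases hc : c = 0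
    · subst hc
      exact ncard_blockIndex_add_eq_of_fst_eq_zero h hm (by rintro rfl; exact ha rfl)
    · exact ncard_blockIndex_add_eq_of_fst_ne_zero h hc y

end Blocks

lemma Nat.Prime.exists_eq_of_dvd_prod_pow {ι : Type*} [Fintype ι] {p r : ι → ℕ}
    (hp : ∀ i, (p i).Prime) {q : ℕ} (hq : q.Prime) (h : q ∣ ∏ i, p i ^ r i) : ∃ i, q = p i := by
  obtain ⟨i, -, hqi⟩ := (Prime.dvd_finsetProd_iff hq.prime _).1 h
  exact ⟨i, (Nat.prime_dvd_prime_iff_eq hq (hp i)).1 (hq.dvd_of_dvd_pow hqi)⟩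

theorem zdb_on_Zn_general (k : ℕ) (hk : 0 < k) (p r : Fin k → ℕ)
    (hp : ∀ i, Nat.Prime (p i)) (n e : ℕ) (hn : n = ∏ i, p i ^ r i)
    (hdiv : ∀ i, e * (e - 1) ∣ p i - 1) :
    ∃ f : ZMod (e * n) → ZMod ((e * n - 1) / (e - 1) + 1),
      IsZDB f (e * n) ((e * n - 1) / (e - 1) + 1) (e - 2) := by
  have hprime (q : ℕ) (hq : q.Prime) (hqn : q ∣ n) : e * (e - 1) ∣ q - 1 := by
    obtain ⟨i, rfl⟩ := hq.exists_eq_of_dvd_prod_pow hp (hn ▸ hqn)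
    exact hdiv i
  obtain ⟨m, rfl, hm⟩ : ∃ m, e = m + 1 ∧ 0 < m := by
    have := (hp ⟨0, hk⟩).two_le
    have := Nat.mul_ne_zero_iff.1 (ne_zero_of_dvd_ne_zero (by omega) (hdiv ⟨0, hk⟩))
    exact ⟨e - 1, by omega, by omega⟩
  rw [Nat.add_sub_cancel] at hprime ⊢
  have hn0 : n ≠ 0 := hn ▸ Finset.prod_ne_zero_iff.2 fun i _ => pow_ne_zero _ (hp i).ne_zero
  have hcop : (m + 1).Coprime n := Nat.coprime_of_dvd fun q hq hqe hqn => by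
    have := Nat.le_of_dvd (Nat.sub_pos_of_lt hq.one_lt)
      (hqe.trans ((dvd_mul_right _ _).trans (hprime q hq hqn)))
    have := hq.pos
    omega
  obtain ⟨u, hu⟩ := exists_isStrongPrimitiveRoot_zmod hn0
    fun q hq hqn => (dvd_mul_left _ _).trans (hprime q hq hqn)
  have := NeZero.mk hn0
  have hF := (isZDB_blockIndex hu hm).comp_addEquiv (ZMod.chineseRemainder hcop).toAddEquiv
  rw [Nat.card_zmod] at hF
  rw [show m + 1 - 2 = m - 1 by omega]
  exact hF.exists_zmod

/-- Corollary 1: for `n` a product of odd prime powers and `e(e-1)` dividing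
`gcd(p_i - 1)`, there is an `(en, (en-1)/(e-1)+1, e-2)` ZDB function on `Z_{en}`. -/
theorem zdb_on_Zn (k : ℕ) (hk : 0 < k) (p r : Fin k → ℕ)
    (hp : ∀ i, Nat.Prime (p i)) (hodd : ∀ i, 2 < p i) (hmono : StrictMono p)
    (hr : ∀ i, 0 < r i) (n e : ℕ) (hn : n = ∏ i, p i ^ r i) (he : 0 < e)
    (hdiv : ∀ i, e * (e - 1) ∣ p i - 1) :
    ∃ f : ZMod (e * n) → ZMod ((e * n - 1) / (e - 1) + 1),
      IsZDB f (e * n) ((e * n - 1) / (e - 1) + 1) (e - 2) :=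
  zdb_on_Zn_general k hk p r hp n e hn hdiv
end

section
/- Let n = p_1^{r_1}···p_k^{r_k} with p_1 < ··· < p_k primes, and let R = ∏_{i=1}^k F_{p_i^{r_i}}. For any positive integer e with e(e−1) dividing gcd(p_1^{r_1}−1, ..., p_k^{r_k}−1), there exists an (en, (en−1)/(e−1) + 1, e−2) zero-difference balanced function from (R × Z_e, +) to (Z_{(en−1)/(e−1)+1}, +). -/
/-!
Write `e = d + 1` and `R = ∏ F_{q_i}`. Since `d ∣ q_i - 1`, each `F_{q_i}ˣ` has an element of
order `d`; together they give `u ∈ Rˣ` of order `d` such that `ζ - 1` is a unit for every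
`ζ ≠ 1` in `⟨u⟩`. Partition `R × ℤ/e` into the point `(0, 0)`, the axis `{0} × (ℤ/e ∖ {0})`,
the sets `O × {-1}` for the `⟨u⟩`-orbits `O` of nonzero elements, and the spirals
`{(u^t y, t) : t ≠ -1}` for `y ≠ 0`. Every block but the first has `d` elements, so there are
`(en - 1)/(e - 1) + 1` blocks. A shift by `(0, β)` keeps in their block exactly the axis
points `(0, t)` with `t, t + β ≠ 0`; a shift by `(α, 0)` exactly the points `(α/(ζ - 1), -1)`
with `ζ ∈ ⟨u⟩ ∖ {1}`; a shift by `(α, β)` exactly one spiral point for each `t` with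
`t, t + β ≠ -1`. Each time these are `e - 2` points.
-/

open Set

section IsZDB

variable {A B C : Type*} [AddGroup A] {f : A → B} {N m l : ℕ}

theorem IsZDB.comp_of_injOn {g : B → C} (hf : IsZDB f N m l) (hg : InjOn g (range f)) :
    IsZDB (g ∘ f) N m l :=
  ⟨hf.1, by rw [range_comp, hg.ncard_image, hf.2.1], fun a ha => by
    simpa only [Function.comp_apply, hg.eq_iff (mem_range_self _) (mem_range_self _)] using
      hf.2.2 a ha⟩

theorem IsZDB.exists_zmod_s8 [Finite A] (hf : IsZDB f N m l) : ∃ g : A → ZMod m, IsZDB g N m l := by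
  classical
  have : NeZero m := ⟨hf.2.1 ▸ ((ncard_pos (finite_range f)).mpr (range_nonempty f)).ne'⟩
  obtain ⟨σ⟩ : Nonempty (range f ≃ ZMod m) := by
    rw [← Finite.card_eq, Nat.card_coe_set_eq, hf.2.1, Nat.card_zmod]
  refine ⟨_, hf.comp_of_injOn (g := fun b => if hb : b ∈ range f then σ ⟨b, hb⟩ else 0) ?_⟩
  intro b hb b' hb' h
  simpa [hb, hb'] using h

end IsZDB

theorem ncard_range_of_ncard_preimage {α β : Type*} [Finite α] {f : α → β} {b₀ : β} {d : ℕ}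
    (hd : 0 < d) (h₀ : (f ⁻¹' {b₀}).ncard = 1)
    (h : ∀ b ∈ range f, b ≠ b₀ → (f ⁻¹' {b}).ncard = d) :
    (range f).ncard = (Nat.card α - 1) / d + 1 := by
  classical
  have := Fintype.ofFinite α
  set T := Finset.univ.image f
  have hfiber b : (f ⁻¹' {b}).ncard = (Finset.univ.filter (f · = b)).card := by
    rw [← ncard_coe_finset]; congr; ext; simp
  have hb₀ : b₀ ∈ T := by
    obtain ⟨a, ha⟩ := nonempty_of_ncard_ne_zero (h₀ ▸ one_ne_zero)
    exact Finset.mem_image.mpr ⟨a, Finset.mem_univ a, ha⟩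
  have hcard : Nat.card α = 1 + (T.card - 1) * d := by
    rw [Nat.card_eq_fintype_card, ← Finset.card_univ, Finset.card_eq_sum_card_image f,
      ← Finset.add_sum_erase _ _ hb₀, ← hfiber, h₀, Finset.sum_congr rfl fun b hb =>
        (hfiber b).symm.trans (h b (by simpa [T] using Finset.mem_of_mem_erase hb)
          (Finset.ne_of_mem_erase hb)),
      Finset.sum_const, Finset.card_erase_of_mem hb₀, smul_eq_mul]
  have hT : (range f).ncard = T.card := by
    rw [← ncard_coe_finset]; simp [T]
  rw [hT, hcard, Nat.add_sub_cancel_left, Nat.mul_div_cancel _ hd]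
  have := Finset.card_pos.mpr ⟨_, hb₀⟩
  omega

theorem Set.ncard_compl_pair {α : Type*} [Finite α] {a b : α} (hab : a ≠ b) :
    ({a, b}ᶜ : Set α).ncard = Nat.card α - 2 := by
  rw [ncard_compl, ncard_pair hab]

theorem ZMod.val_lt_of_ne_neg_one {d : ℕ} {t : ZMod (d + 1)} (ht : t ≠ -1) : t.val < d := by
  have := ZMod.val_lt t
  have : t.val ≠ d := fun h => ht (ZMod.val_injective _ (h.trans (ZMod.val_neg_one d).symm))
  omega

section UnitSubgroup

variable {R : Type*} [CommRing R] {H : Subgroup Rˣ}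

theorem mem_orbit_iff_exists_mul {v w : R} :
    w ∈ MulAction.orbit H v ↔ ∃ ζ ∈ H, (ζ : R) * v = w := by
  simp [MulAction.mem_orbit_iff, Subgroup.smul_def, Units.smul_def]

theorem ne_zero_of_mul_eq_add {ζ v α : R} (hα : α ≠ 0) (h : ζ * v = v + α) : v ≠ 0 := by
  rintro rfl
  simp_all

variable (hH : ∀ ζ ∈ H, ζ ≠ 1 → IsUnit ((ζ : R) - 1))
include hH

theorem eq_of_mul_eq_mul_of_ne_zero {ζ ζ' : Rˣ} (hζ : ζ ∈ H) (hζ' : ζ' ∈ H) {v : R}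
    (hv : v ≠ 0) (h : (ζ : R) * v = ζ' * v) : ζ = ζ' := by
  by_contra hne
  have hunit := hH (ζ'⁻¹ * ζ) (H.mul_mem (H.inv_mem hζ') hζ)
    (by rwa [ne_eq, inv_mul_eq_one, eq_comm])
  refine hv (hunit.mul_right_eq_zero.mp ?_)
  rw [Units.val_mul, sub_mul, mul_assoc, h, ← mul_assoc, ← Units.val_mul, inv_mul_cancel,
    Units.val_one, sub_self]

theorem mul_eq_add_iff {ζ : Rˣ} (hζ : ζ ∈ H) (hζ1 : ζ ≠ 1) (v α : R) :
    (ζ : R) * v = v + α ↔ v = Ring.inverse ((ζ : R) - 1) * α := by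
  rw [eq_comm (a := v), Ring.inverse_mul_eq_iff_eq_mul _ _ _ (hH ζ hζ hζ1), sub_mul, one_mul,
    eq_sub_iff_add_eq, add_comm, eq_comm]

theorem ncard_orbit {v : R} (hv : v ≠ 0) : (MulAction.orbit H v).ncard = Nat.card H :=
  ncard_range_of_injective fun ζ ζ' h =>
    Subtype.ext (eq_of_mul_eq_mul_of_ne_zero hH ζ.2 ζ'.2 hv h)

theorem ncard_setOf_mul_eq_add {α : R} (hα : α ≠ 0) :
    {v : R | ∃ ζ ∈ H, ζ ≠ 1 ∧ (ζ : R) * v = v + α}.ncard = Nat.card H - 1 := by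
  have : {v : R | ∃ ζ ∈ H, ζ ≠ 1 ∧ (ζ : R) * v = v + α} =
      (fun ζ : Rˣ => Ring.inverse ((ζ : R) - 1) * α) '' ((H : Set Rˣ) \ {1}) := by
    ext v
    simp only [mem_ofPred_eq, mem_image, mem_sdiff, SetLike.mem_coe, mem_singleton_iff, and_assoc]
    refine exists_congr fun ζ => and_congr_right fun hζ => and_congr_right fun hζ1 => ?_
    rw [mul_eq_add_iff hH hζ hζ1, eq_comm]
  rw [this, InjOn.ncard_image, ncard_sdiff_singleton_of_mem H.one_mem, ← Nat.card_coe_set_eq]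
  · rfl
  rintro ζ ⟨hζ, hζ1⟩ ζ' ⟨hζ', hζ1'⟩ h
  set v := Ring.inverse ((ζ : R) - 1) * α
  have hv := (mul_eq_add_iff hH hζ hζ1 v α).mpr rfl
  have hv' := (mul_eq_add_iff hH hζ' hζ1' v α).mpr h
  exact eq_of_mul_eq_mul_of_ne_zero hH hζ hζ' (ne_zero_of_mul_eq_add hα hv) (hv.trans hv'.symm)

end UnitSubgroup

inductive ZDBBlock (R : Type*)
  | origin
  | axis
  | orbit (O : Set R)
  | spiral (y : R)

section Construction

variable {R : Type*} [CommRing R] (u : Rˣ) (d : ℕ)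

open scoped Classical in
noncomputable def zdbBlock (x : R × ZMod (d + 1)) : ZDBBlock R :=
  if x.1 = 0 then (if x.2 = 0 then .origin else .axis)
  else if x.2 = -1 then .orbit (MulAction.orbit (Subgroup.zpowers u) x.1)
  else .spiral (↑(u ^ x.2.val)⁻¹ * x.1)

variable {u d}

theorem zdbBlock_eq_origin_iff {x : R × ZMod (d + 1)} : zdbBlock u d x = .origin ↔ x = 0 := by
  unfold zdbBlock; split_ifs <;> simp_all [Prod.ext_iff]

theorem zdbBlock_eq_axis_iff {x : R × ZMod (d + 1)} :
    zdbBlock u d x = .axis ↔ x.1 = 0 ∧ x.2 ≠ 0 := by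
  unfold zdbBlock; split_ifs <;> simp_all

theorem zdbBlock_eq_orbit_iff {x : R × ZMod (d + 1)} {O : Set R} :
    zdbBlock u d x = .orbit O ↔
      x.1 ≠ 0 ∧ x.2 = -1 ∧ MulAction.orbit (Subgroup.zpowers u) x.1 = O := by
  unfold zdbBlock; split_ifs <;> simp_all

theorem zdbBlock_eq_spiral_iff {x : R × ZMod (d + 1)} {y : R} :
    zdbBlock u d x = .spiral y ↔ x.1 ≠ 0 ∧ x.2 ≠ -1 ∧ ↑(u ^ x.2.val)⁻¹ * x.1 = y := by
  unfold zdbBlock; split_ifs <;> simp_all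

theorem preimage_zdbBlock_origin : zdbBlock u d ⁻¹' {.origin} = {0} := by
  ext; simp [zdbBlock_eq_origin_iff]

theorem ncard_preimage_zdbBlock_axis : (zdbBlock u d ⁻¹' {.axis}).ncard = d := by
  have : zdbBlock u d ⁻¹' {.axis} = {0} ×ˢ {0}ᶜ := by ext; simp [zdbBlock_eq_axis_iff]
  rw [this, ncard_prod, ncard_singleton, ncard_compl, ncard_singleton, Nat.card_zmod]
  omega

theorem ncard_preimage_zdbBlock_spiral {y : R} (hy : y ≠ 0) :
    (zdbBlock u d ⁻¹' {.spiral y}).ncard = d := by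
  have : zdbBlock u d ⁻¹' {.spiral y} = (fun t => (↑(u ^ t.val) * y, t)) '' {-1}ᶜ := by
    ext ⟨w, t⟩
    simp only [mem_preimage, mem_singleton_iff, zdbBlock_eq_spiral_iff, Units.inv_mul_eq_iff_eq_mul,
      mem_image, mem_compl_iff, Prod.mk.injEq]
    constructor
    · rintro ⟨-, ht, rfl⟩; exact ⟨t, ht, rfl, rfl⟩
    · rintro ⟨t, ht, rfl, rfl⟩
      exact ⟨(Units.isUnit _).mul_right_eq_zero.not.mpr hy, ht, rfl⟩
  rw [this, ncard_image_of_injective _ fun t t' h => (Prod.ext_iff.mp h).2, ncard_compl,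
    ncard_singleton, Nat.card_zmod, Nat.add_sub_cancel]

variable (hu : orderOf u = d)
include hu

theorem pow_val_injOn : InjOn (fun t : ZMod (d + 1) => u ^ t.val) {-1}ᶜ := fun t ht t' ht' h =>
  ZMod.val_injective _ <| pow_injOn_Iio_orderOf (by simpa [hu] using ZMod.val_lt_of_ne_neg_one ht)
    (by simpa [hu] using ZMod.val_lt_of_ne_neg_one ht') h

variable (hH : ∀ ζ ∈ Subgroup.zpowers u, ζ ≠ 1 → IsUnit ((ζ : R) - 1))
include hH

theorem ncard_preimage_zdbBlock_orbit {v : R} (hv : v ≠ 0) :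
    (zdbBlock u d ⁻¹' {.orbit (MulAction.orbit (Subgroup.zpowers u) v)}).ncard = d := by
  have : zdbBlock u d ⁻¹' {.orbit (MulAction.orbit (Subgroup.zpowers u) v)} =
      MulAction.orbit (Subgroup.zpowers u) v ×ˢ {-1} := by
    ext ⟨w, t⟩
    simp only [mem_preimage, mem_singleton_iff, zdbBlock_eq_orbit_iff, MulAction.orbit_eq_iff,
      mem_prod]
    constructor
    · rintro ⟨-, rfl, h⟩; exact ⟨h, rfl⟩
    · rintro ⟨h, rfl⟩
      refine ⟨?_, rfl, h⟩
      obtain ⟨ζ, -, rfl⟩ := mem_orbit_iff_exists_mul.mp h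
      exact (ζ.isUnit.mul_right_eq_zero).not.mpr hv
  rw [this, ncard_prod, ncard_orbit hH hv, ncard_singleton, mul_one, Nat.card_zpowers, hu]

theorem ncard_zdbBlock_shift_vertical {β : ZMod (d + 1)} (hβ : β ≠ 0) :
    {x | zdbBlock u d (x + (0, β)) = zdbBlock u d x}.ncard = d - 1 := by
  have : {x | zdbBlock u d (x + (0, β)) = zdbBlock u d x} = {0} ×ˢ {0, -β}ᶜ := by
    ext ⟨v, t⟩
    simp only [mem_ofPred_eq, Prod.mk_add_mk, add_zero, mem_prod, mem_singleton_iff, mem_compl_iff,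
      mem_insert_iff, not_or]
    by_cases hv : v = 0
    · simp only [zdbBlock, hv, if_true, true_and, eq_neg_iff_add_eq_zero]
      split_ifs <;> simp_all
    · simp only [zdbBlock, hv, if_false, false_and, iff_false]
      split_ifs with htβ ht ht
      · simp_all
      · simp
      · simp
      · intro heq
        have hpow := inv_inj.mp <| eq_of_mul_eq_mul_of_ne_zero hH
          (inv_mem (Subgroup.npow_mem_zpowers u _)) (inv_mem (Subgroup.npow_mem_zpowers u _))
          hv (ZDBBlock.spiral.inj heq)
        exact hβ (add_eq_left.mp (pow_val_injOn hu htβ ht hpow))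
  rw [this, ncard_prod, ncard_singleton, one_mul, ncard_compl_pair (by simpa [eq_comm] using hβ),
    Nat.card_zmod]
  omega

theorem ncard_zdbBlock_shift_horizontal {α : R} (hα : α ≠ 0) :
    {x | zdbBlock u d (x + (α, 0)) = zdbBlock u d x}.ncard = d - 1 := by
  have : {x | zdbBlock u d (x + (α, 0)) = zdbBlock u d x} =
      {v : R | ∃ ζ ∈ Subgroup.zpowers u, ζ ≠ 1 ∧ (ζ : R) * v = v + α} ×ˢ {-1} := by
    ext ⟨v, t⟩
    simp only [mem_ofPred_eq, Prod.mk_add_mk, add_zero, mem_prod, mem_singleton_iff]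
    by_cases hv : v = 0
    · simp only [zdbBlock, hv, zero_add, hα, if_true, if_false]
      split_ifs <;> simp_all [Ne.symm hα]
    by_cases hvα : v + α = 0
    · simp only [zdbBlock, hv, hvα, if_true, if_false]
      split_ifs <;> simp_all
    simp only [zdbBlock, hv, hvα, if_false]
    split_ifs with ht
    · rw [ZDBBlock.orbit.injEq, MulAction.orbit_eq_iff, mem_orbit_iff_exists_mul]
      simp only [ht, and_true]
      refine exists_congr fun ζ => and_congr_right fun _ => (and_iff_right_of_imp ?_).symm
      rintro h rfl
      exact hα (by simpa using h)
    · simp only [ht, and_false, iff_false, ZDBBlock.spiral.injEq, Units.mul_right_inj, add_eq_left]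
      exact hα
  rw [this, ncard_prod, ncard_setOf_mul_eq_add hH hα, ncard_singleton, mul_one, Nat.card_zpowers,
    hu]

theorem ncard_zdbBlock_shift_diagonal {α : R} {β : ZMod (d + 1)} (hα : α ≠ 0) (hβ : β ≠ 0) :
    {x | zdbBlock u d (x + (α, β)) = zdbBlock u d x}.ncard = d - 1 := by
  set ζ : ZMod (d + 1) → Rˣ := fun t => u ^ (t + β).val * (u ^ t.val)⁻¹
  have hζ : ∀ t, ζ t ∈ Subgroup.zpowers u := fun t =>
    mul_mem (Subgroup.npow_mem_zpowers u _) (inv_mem (Subgroup.npow_mem_zpowers u _))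
  have hζ1 : ∀ t ∈ ({-1, -1 - β}ᶜ : Set _), ζ t ≠ 1 := by
    intro t ht h
    simp only [mem_compl_iff, mem_insert_iff, mem_singleton_iff, not_or, eq_sub_iff_add_eq] at ht
    exact hβ (add_eq_left.mp (pow_val_injOn hu ht.2 ht.1 (mul_inv_eq_one.mp h)))
  have : {x | zdbBlock u d (x + (α, β)) = zdbBlock u d x} =
      (fun t => (Ring.inverse ((ζ t : R) - 1) * α, t)) '' {-1, -1 - β}ᶜ := by
    ext ⟨v, t⟩
    simp only [mem_ofPred_eq, Prod.mk_add_mk, mem_image, Prod.mk.injEq, exists_eq_right_right]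
    rw [and_congr_right fun ht => (eq_comm.trans (mul_eq_add_iff hH (hζ t) (hζ1 t ht) v α).symm)]
    simp only [mem_compl_iff, mem_insert_iff, mem_singleton_iff, not_or, eq_sub_iff_add_eq]
    by_cases hv : v = 0
    · simp only [zdbBlock, hv, zero_add, hα, if_true, if_false]
      split_ifs <;> simp_all [Ne.symm hα]
    by_cases hvα : v + α = 0
    · simp only [zdbBlock, hv, hvα, if_true, if_false]
      split_ifs <;> simp_all
    simp only [zdbBlock, hv, hvα, if_false]
    split_ifs with htβ ht ht
    · exact absurd (add_eq_left.mp (ht ▸ htβ)) hβ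
    · simp [htβ]
    · simp [ht]
    · rw [ZDBBlock.spiral.injEq, Units.inv_mul_eq_iff_eq_mul, ← mul_assoc, ← Units.val_mul, eq_comm]
      simp [htβ, ht, ζ]
  rw [this, ncard_image_of_injective _ fun t t' h => (Prod.ext_iff.mp h).2,
    ncard_compl_pair fun h => hβ (by simpa using h.symm), Nat.card_zmod]
  omega

theorem ncard_preimage_zdbBlock {x : R × ZMod (d + 1)} (hx : zdbBlock u d x ≠ .origin) :
    (zdbBlock u d ⁻¹' {zdbBlock u d x}).ncard = d := by
  rcases hb : zdbBlock u d x with _ | _ | O | y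
  · exact absurd hb hx
  · exact ncard_preimage_zdbBlock_axis
  · obtain ⟨hv, -, rfl⟩ := zdbBlock_eq_orbit_iff.mp hb
    exact ncard_preimage_zdbBlock_orbit hu hH hv
  · obtain ⟨hv, -, rfl⟩ := zdbBlock_eq_spiral_iff.mp hb
    exact ncard_preimage_zdbBlock_spiral ((Units.isUnit _).mul_right_eq_zero.not.mpr hv)

theorem ncard_zdbBlock_shift {a : R × ZMod (d + 1)} (ha : a ≠ 0) :
    {x | zdbBlock u d (x + a) = zdbBlock u d x}.ncard = d - 1 := by
  obtain ⟨α, β⟩ := a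
  by_cases hα : α = 0
  · subst hα
    exact ncard_zdbBlock_shift_vertical hu hH fun hβ => ha (by rw [hβ]; rfl)
  by_cases hβ : β = 0
  · subst hβ
    exact ncard_zdbBlock_shift_horizontal hu hH hα
  exact ncard_zdbBlock_shift_diagonal hu hH hα hβ

theorem isZDB_zdbBlock [Finite R] :
    IsZDB (zdbBlock u d) ((d + 1) * Nat.card R) (((d + 1) * Nat.card R - 1) / d + 1) (d - 1) := by
  have hd : 0 < d := hu ▸ orderOf_pos u
  have hcard : Nat.card (R × ZMod (d + 1)) = (d + 1) * Nat.card R := by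
    rw [Nat.card_prod, Nat.card_zmod, mul_comm]
  refine ⟨hcard, ?_, fun a ha => ncard_zdbBlock_shift hu hH ha⟩
  rw [← hcard]
  refine ncard_range_of_ncard_preimage hd (b₀ := .origin) ?_ ?_
  · rw [preimage_zdbBlock_origin, ncard_singleton]
  · rintro _ ⟨x, rfl⟩ hx
    exact ncard_preimage_zdbBlock hu hH hx

end Construction

theorem IsCyclic.exists_orderOf_eq_of_dvd {G : Type*} [Group G] [IsCyclic G] [Finite G] {d : ℕ}
    (hd : d ∣ Nat.card G) : ∃ g : G, orderOf g = d := by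
  obtain ⟨g, hg⟩ := IsCyclic.exists_ofOrder_eq_natCard (α := G)
  exact ⟨g ^ (Nat.card G / d), hg ▸ orderOf_pow_orderOf_div (hg ▸ Nat.card_pos.ne') (hg ▸ hd)⟩

section PiField

variable {ι : Type*} {F : ι → Type*} [∀ i, Field (F i)] {d : ℕ}

theorem exists_units_pi_forall_orderOf_eq [∀ i, Finite (F i)] (hd : ∀ i, d ∣ Nat.card (F i) - 1) :
    ∃ u : (Π i, F i)ˣ, ∀ i, orderOf (MulEquiv.piUnits u i) = d := by
  choose v hv using fun i =>
    IsCyclic.exists_orderOf_eq_of_dvd (G := (F i)ˣ) (Nat.card_units (F i) ▸ hd i)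
  exact ⟨MulEquiv.piUnits.symm v, fun i => by simpa using hv i⟩

theorem orderOf_eq_and_isUnit_sub_one_of_forall_orderOf_eq [Nonempty ι] {u : (Π i, F i)ˣ}
    (hu : ∀ i, orderOf (MulEquiv.piUnits u i) = d) :
    orderOf u = d ∧ ∀ ζ ∈ Subgroup.zpowers u, ζ ≠ 1 → IsUnit ((ζ : Π i, F i) - 1) := by
  have hpow (j : ℤ) i : MulEquiv.piUnits u i ^ j = 1 ↔ (d : ℤ) ∣ j := by
    rw [← hu i, orderOf_dvd_iff_zpow_eq_one]
  have hpow' (j : ℤ) : u ^ j = 1 ↔ (d : ℤ) ∣ j := by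
    rw [← MulEquiv.piUnits.injective.eq_iff, map_zpow, map_one, funext_iff]
    simp only [Pi.pow_apply, Pi.one_apply, hpow, forall_const]
  refine ⟨?_, ?_⟩
  · have h j := orderOf_dvd_iff_zpow_eq_one.trans (hpow' j)
    exact Nat.dvd_antisymm (Int.natCast_dvd_natCast.mp ((h d).mpr dvd_rfl))
      (Int.natCast_dvd_natCast.mp ((h (orderOf u)).mp dvd_rfl))
  · rintro _ ⟨j, rfl⟩ hj
    refine Pi.isUnit_iff.mpr fun i => isUnit_iff_ne_zero.mpr (sub_ne_zero.mpr fun h => ?_)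
    refine hj ((hpow' j).mpr ((hpow j i).mp (Units.ext ?_)))
    rw [← Pi.pow_apply, ← map_zpow]
    exact h

end PiField

theorem zdb_on_product_of_fields_general (k : ℕ) (hk : 0 < k) (p r : Fin k → ℕ)
    (F : Fin k → Type*) [∀ i, Field (F i)] [∀ i, Fintype (F i)]
    (hF : ∀ i, Fintype.card (F i) = p i ^ r i)
    (n e : ℕ) (hn : n = ∏ i, p i ^ r i)
    (hdiv : ∀ i, e * (e - 1) ∣ p i ^ r i - 1) :
    ∃ f : ((∀ i, F i) × ZMod e) → ZMod ((e * n - 1) / (e - 1) + 1),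
      IsZDB f (e * n) ((e * n - 1) / (e - 1) + 1) (e - 2) := by
  have : Nonempty (Fin k) := ⟨⟨0, hk⟩⟩
  have hcard i : Nat.card (F i) = p i ^ r i := by rw [Nat.card_eq_fintype_card, hF]
  obtain ⟨d, rfl⟩ : ∃ d, e = d + 1 := by
    have h0 := hdiv ⟨0, hk⟩
    have h1 := hcard ⟨0, hk⟩ ▸ Finite.one_lt_card (α := F ⟨0, hk⟩)
    refine ⟨e - 1, ?_⟩
    rcases Nat.eq_zero_or_pos e with rfl | he
    · simp at h0; omega
    · omega
  obtain ⟨u, hu⟩ := exists_units_pi_forall_orderOf_eq (d := d) fun i =>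
    hcard i ▸ dvd_of_mul_left_dvd (hdiv i)
  obtain ⟨hord, hH⟩ := orderOf_eq_and_isUnit_sub_one_of_forall_orderOf_eq hu
  have hN : Nat.card (∀ i, F i) = n := by
    rw [Nat.card_pi, hn]; exact Finset.prod_congr rfl fun i _ => hcard i
  subst hN
  rw [Nat.add_sub_cancel, show d + 1 - 2 = d - 1 by omega]
  exact (isZDB_zdbBlock hord hH).exists_zmod_s8

/-- Corollary 2: for `R` a product of finite fields `F_{p_i^{r_i}}` with
`e(e-1) ∣ gcd(p_i^{r_i} - 1)`, there is an `(en, (en-1)/(e-1)+1, e-2)` ZDB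
function on `R × Z_e`. -/
theorem zdb_on_product_of_fields (k : ℕ) (hk : 0 < k) (p r : Fin k → ℕ)
    (hp : ∀ i, Nat.Prime (p i)) (hmono : StrictMono p) (hr : ∀ i, 0 < r i)
    (F : Fin k → Type*) [∀ i, Field (F i)] [∀ i, Fintype (F i)]
    (hF : ∀ i, Fintype.card (F i) = p i ^ r i)
    (n e : ℕ) (hn : n = ∏ i, p i ^ r i) (he : 0 < e)
    (hdiv : ∀ i, e * (e - 1) ∣ p i ^ r i - 1) :
    ∃ f : ((∀ i, F i) × ZMod e) → ZMod ((e * n - 1) / (e - 1) + 1),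
      IsZDB f (e * n) ((e * n - 1) / (e - 1) + 1) (e - 2) :=
  zdb_on_product_of_fields_general k hk p r F hF n e hn hdiv
end

section
/- Let R be a finite commutative ring of order n ≥ 3 with identity and G ≤ R^× a subgroup of order e such that (G−1)\{0} ⊆ R^× and G+1 ⊆ R^×. Then H = G ∪ (−G) is a subgroup of (R^×, ×) of order 2e satisfying (H−1)\{0} ⊆ R^×. -/
/-- Proposition 2 (structure part): if every nonzero element of `G - 1` is a unit
and every element of `G + 1` is a unit, then `H = G ∪ (-G)` is a subgroup of `Rˣ`
of order `2e` with every nonzero element of `H - 1` a unit. -/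
theorem union_neg_subgroup {R : Type*} [CommRing R] [Fintype R]
    (hn : 3 ≤ Fintype.card R) (G : Subgroup Rˣ)
    (hG1 : ∀ g ∈ G, ((g : Rˣ) : R) - 1 ≠ 0 → IsUnit (((g : Rˣ) : R) - 1))
    (hG2 : ∀ g ∈ G, IsUnit (((g : Rˣ) : R) + 1)) :
    ∃ H : Subgroup Rˣ,
      (H : Set Rˣ) = {u : Rˣ | u ∈ G ∨ -u ∈ G} ∧
      Nat.card H = 2 * Nat.card G ∧
      ∀ h ∈ H, ((h : Rˣ) : R) - 1 ≠ 0 → IsUnit (((h : Rˣ) : R) - 1) := by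
  have hneg1 : (-1 : Rˣ) ∉ G := by
    intro h
    have h2 := hG2 _ h
    simp only [Units.val_neg, Units.val_one, neg_add_cancel, isUnit_zero_iff] at h2
    have : Subsingleton R := subsingleton_of_zero_eq_one h2
    have := Fintype.card_le_one_iff_subsingleton.mpr this
    omega
  refine ⟨{ carrier := {u : Rˣ | u ∈ G ∨ -u ∈ G}
            one_mem' := Or.inl G.one_mem
            mul_mem' := by
              rintro a b (ha | ha) (hb | hb)
              · exact Or.inl (G.mul_mem ha hb)
              · exact Or.inr (by rw [← mul_neg]; exact G.mul_mem ha hb)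
              · exact Or.inr (by rw [← neg_mul]; exact G.mul_mem ha hb)
              · exact Or.inl (by rw [← neg_mul_neg a b]; exact G.mul_mem ha hb)
            inv_mem' := by
              rintro a (ha | ha)
              · exact Or.inl (G.inv_mem ha)
              · exact Or.inr (by rw [← inv_neg]; exact G.inv_mem ha) }, rfl, ?_, ?_⟩
  · have hdisj : Disjoint (G : Set Rˣ) (Neg.neg '' (G : Set Rˣ)) := by
      rw [Set.disjoint_left]
      rintro u hu ⟨g, hg, rfl⟩
      exact hneg1 (by simpa using G.mul_mem hg (G.inv_mem hu))
    have hset : {u : Rˣ | u ∈ G ∨ -u ∈ G} = (G : Set Rˣ) ∪ Neg.neg '' (G : Set Rˣ) := by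
      ext u
      simp only [Set.mem_setOf_eq, Set.mem_union, Set.mem_image, SetLike.mem_coe]
      constructor
      · rintro (h | h)
        · exact Or.inl h
        · exact Or.inr ⟨-u, h, by simp⟩
      · rintro (h | ⟨g, hg, rfl⟩)
        · exact Or.inl h
        · exact Or.inr (by simpa using hg)
    show Nat.card {u : Rˣ | u ∈ G ∨ -u ∈ G} = 2 * Nat.card G
    rw [Nat.card_coe_set_eq, hset, Set.ncard_union_eq hdisj (Set.toFinite _) (Set.toFinite _),
      Set.ncard_image_of_injective _ neg_injective]
    rw [two_mul, ← Nat.card_coe_set_eq]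
    rfl
  · rintro h (hh | hh) hne
    · exact hG1 _ hh hne
    · have := hG2 _ hh
      rw [Units.val_neg] at this
      have : IsUnit (-((-(h : R)) + 1)) := this.neg
      simpa [neg_add, sub_eq_add_neg, add_comm] using this
end

section
/- Let R be a finite commutative ring of order n ≥ 3 with identity and G ≤ R^× a subgroup of order e such that every nonzero element of G−1 is a unit and every element of G+1 is a unit. Then there exists an (n, (n−1)/(2e) + 1, 2e−1) zero-difference balanced function on (R, +). -/
/-- Proposition 2: under the conditions `(G-1)\{0} ⊆ Rˣ` and `G+1 ⊆ Rˣ`, there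
is an `(n, (n-1)/(2e)+1, 2e-1)` ZDB function on `(R, +)`. -/
theorem zdb_from_union_neg {R : Type*} [CommRing R] [Fintype R]
    (hn : 3 ≤ Fintype.card R) (G : Subgroup Rˣ)
    (hG1 : ∀ g ∈ G, ((g : Rˣ) : R) - 1 ≠ 0 → IsUnit (((g : Rˣ) : R) - 1))
    (hG2 : ∀ g ∈ G, IsUnit (((g : Rˣ) : R) + 1)) :
    ∃ f : R → ZMod ((Fintype.card R - 1) / (2 * Nat.card G) + 1),
      IsZDB f (Fintype.card R)
        ((Fintype.card R - 1) / (2 * Nat.card G) + 1) (2 * Nat.card G - 1) := by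
  classical
  have hnt : Nontrivial R := Fintype.one_lt_card_iff_nontrivial.mp (by omega)
  set e := Nat.card G with he
  have hepos : 0 < e := Nat.card_pos
  -- -1 is not in G
  have hneg1 : (-1 : Rˣ) ∉ G := by
    intro hmem
    have h0 := hG2 _ hmem
    rw [show (((-1 : Rˣ) : R)) + 1 = 0 by simp] at h0
    exact not_isUnit_zero h0
  -- the subgroup H = G ∪ -G
  set H : Subgroup Rˣ :=
    { carrier := {h | h ∈ G ∨ -h ∈ G}
      one_mem' := Or.inl G.one_mem
      mul_mem' := by
        rintro a b (ha | ha) (hb | hb)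
        · exact Or.inl (G.mul_mem ha hb)
        · exact Or.inr (by rw [← mul_neg]; exact G.mul_mem ha hb)
        · exact Or.inr (by rw [← neg_mul]; exact G.mul_mem ha hb)
        · exact Or.inl (by simpa using G.mul_mem ha hb)
      inv_mem' := by
        rintro a (ha | ha)
        · exact Or.inl (G.inv_mem ha)
        · exact Or.inr (by rw [← inv_neg]; exact G.inv_mem ha) } with hHdef
  have hHmem : ∀ h : Rˣ, h ∈ H ↔ h ∈ G ∨ -h ∈ G := fun _ => Iff.rfl
  -- cardinality of H
  have hsetH : (H : Set Rˣ) = (G : Set Rˣ) ∪ (fun u => -u) '' (G : Set Rˣ) := by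
    ext u
    constructor
    · rintro (hu | hu)
      · exact Or.inl hu
      · exact Or.inr ⟨-u, hu, by simp⟩
    · rintro (hu | ⟨g, hg, rfl⟩)
      · exact Or.inl hu
      · exact Or.inr (by simpa using hg)
  have hdisj : Disjoint (G : Set Rˣ) ((fun u => -u) '' (G : Set Rˣ)) := by
    rw [Set.disjoint_left]
    rintro u hu ⟨g, hg, rfl⟩
    have : (-1 : Rˣ) ∈ G := by
      have := G.mul_mem hu (G.inv_mem hg)
      simpa using this
    exact hneg1 this
  have hcardG : (G : Set Rˣ).ncard = e := by
    rw [← Nat.card_coe_set_eq]; rfl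
  have hcardH : Nat.card ↥H = 2 * e := by
    rw [← SetLike.coe_sort_coe, Nat.card_coe_set_eq, hsetH,
      Set.ncard_union_eq hdisj (Set.toFinite _) (Set.toFinite _),
      Set.ncard_image_of_injective _ neg_injective, hcardG]
    omega
  -- units lemma
  have hunit : ∀ h : Rˣ, h ∈ H → h ≠ 1 → IsUnit ((h : R) - 1) := by
    rintro h (hh | hh) hne
    · refine hG1 h hh ?_
      intro h0
      exact hne (Units.ext (by rw [sub_eq_zero] at h0; simpa using h0))
    · have := hG2 _ hh
      have h2 : ((-h : Rˣ) : R) + 1 = -((h : R) - 1) := by push_cast; ring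
      rw [h2] at this
      exact (IsUnit.neg_iff _).mp this
  -- freeness
  have hfree : ∀ h : Rˣ, h ∈ H → ∀ x : R, x ≠ 0 → (h : R) * x = x → h = 1 := by
    intro h hh x hx hfix
    by_contra hne
    have hu := hunit h hh hne
    have : ((h : R) - 1) * x = 0 := by rw [sub_mul, one_mul, hfix, sub_self]
    exact hx ((hu.mul_right_eq_zero).mp this)
  -- the setoid of H-orbits
  set sd : Setoid R :=
    { r := fun x y => ∃ h ∈ H, ((h : Rˣ) : R) * y = x
      iseqv := by
        constructor
        · intro x; exact ⟨1, H.one_mem, by simp⟩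
        · rintro x y ⟨h, hh, rfl⟩
          exact ⟨h⁻¹, H.inv_mem hh, by simp⟩
        · rintro x y z ⟨h, hh, rfl⟩ ⟨k, hk, rfl⟩
          exact ⟨h * k, H.mul_mem hh hk, by simp [mul_assoc]⟩ } with hsd
  haveI : Finite (Quotient sd) := Quotient.finite sd
  haveI : Fintype (Quotient sd) := Fintype.ofFinite _
  have heq : ∀ x y : R, Quotient.mk sd x = Quotient.mk sd y ↔
      ∃ h ∈ H, ((h : Rˣ) : R) * y = x := by
    intro x y
    constructor
    · exact fun h => Quotient.exact h
    · exact fun h => Quotient.sound h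
  -- fiber cardinalities
  set F : Quotient sd → ℕ :=
    fun q => (Finset.univ.filter fun x : R => Quotient.mk sd x = q).card with hF
  have hsum : (Finset.univ : Finset R).card = ∑ q : Quotient sd, F q :=
    Finset.card_eq_sum_card_fiberwise (fun x _ => Finset.mem_univ _)
  have hF0 : F (Quotient.mk sd 0) = 1 := by
    have hflt : (Finset.univ.filter fun x : R => Quotient.mk sd x = Quotient.mk sd 0)
        = {0} := by
      ext x
      simp only [Finset.mem_filter, Finset.mem_univ, true_and, Finset.mem_singleton, heq]
      constructor
      · rintro ⟨h, hh, hx⟩; rw [← hx]; simp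
      · rintro rfl; exact ⟨1, H.one_mem, by simp⟩
    simp only [hF, hflt, Finset.card_singleton]
  have hFq : ∀ q : Quotient sd, q ≠ Quotient.mk sd 0 → F q = 2 * e := by
    intro q hq
    have hx : Quotient.mk sd q.out = q := q.out_eq
    have hx0 : q.out ≠ 0 := by
      intro h0
      rw [h0] at hx
      exact hq hx.symm
    have hbij : Function.Bijective (fun h : ↥H =>
        (⟨((h : Rˣ) : R) * q.out,
          ((heq _ _).mpr ⟨(h : Rˣ), h.2, rfl⟩).trans hx⟩ :
          {y : R // Quotient.mk sd y = q})) := by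
      constructor
      · intro h₁ h₂ hhe
        have h12 : ((h₁ : Rˣ) : R) * q.out = ((h₂ : Rˣ) : R) * q.out :=
          congrArg Subtype.val hhe
        have h3 : (((h₂⁻¹ * h₁ : ↥H) : Rˣ) : R) * q.out = q.out := by
          have h5 : (((h₂ : Rˣ)⁻¹ : Rˣ) : R) * (((h₁ : Rˣ) : R) * q.out)
              = (((h₂ : Rˣ)⁻¹ : Rˣ) : R) * (((h₂ : Rˣ) : R) * q.out) := by rw [h12]
          rw [Units.inv_mul_cancel_left] at h5
          push_cast
          rw [mul_assoc]
          exact h5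
        have h4 := hfree _ (h₂⁻¹ * h₁ : ↥H).2 q.out hx0 h3
        have h5 : h₂⁻¹ * h₁ = (1 : ↥H) := Subtype.ext h4
        exact (inv_mul_eq_one.mp h5).symm
      · rintro ⟨y, hy⟩
        rw [← hx] at hy
        obtain ⟨h, hh, hhy⟩ := (heq y q.out).mp hy
        exact ⟨⟨h, hh⟩, Subtype.ext hhy⟩
    calc F q = Fintype.card {y : R // Quotient.mk sd y = q} :=
            (Fintype.card_subtype _).symm
      _ = Fintype.card ↥H := (Fintype.card_of_bijective hbij).symm
      _ = 2 * e := by rw [← Nat.card_eq_fintype_card, hcardH]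
  have hcount : Fintype.card R = 1 + (Fintype.card (Quotient sd) - 1) * (2 * e) := by
    rw [← Finset.card_univ, hsum,
      ← Finset.add_sum_erase _ F (Finset.mem_univ (Quotient.mk sd 0)), hF0]
    congr 1
    rw [Finset.sum_congr rfl (fun q hq => hFq q (Finset.ne_of_mem_erase hq)),
      Finset.sum_const, smul_eq_mul, Finset.card_erase_of_mem (Finset.mem_univ _),
      Finset.card_univ]
  haveI : Nonempty (Quotient sd) := ⟨Quotient.mk sd 0⟩
  have hQpos : 1 ≤ Fintype.card (Quotient sd) := Fintype.card_pos
  have hmQ : Fintype.card (Quotient sd) = (Fintype.card R - 1) / (2 * e) + 1 := by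
    have h1 : Fintype.card R - 1 = (Fintype.card (Quotient sd) - 1) * (2 * e) := by omega
    rw [h1, Nat.mul_div_cancel _ (by omega)]
    omega
  have hzcard : Fintype.card (ZMod ((Fintype.card R - 1) / (2 * e) + 1))
      = (Fintype.card R - 1) / (2 * e) + 1 := ZMod.card _
  let φ : Quotient sd ≃ ZMod ((Fintype.card R - 1) / (2 * e) + 1) :=
    Fintype.equivOfCardEq (by rw [hmQ, hzcard])
  refine ⟨fun x => φ (Quotient.mk sd x), Nat.card_eq_fintype_card, ?_, ?_⟩
  · -- size of range
    have hsurj : Function.Surjective (fun x : R => φ (Quotient.mk sd x)) := by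
      intro z
      refine ⟨(φ.symm z).out, ?_⟩
      show φ (Quotient.mk sd (φ.symm z).out) = z
      rw [Quotient.out_eq, Equiv.apply_symm_apply]
    rw [Set.range_eq_univ.mpr hsurj, Set.ncard_univ, Nat.card_eq_fintype_card, hzcard]
  · -- the ZDB property
    intro a ha
    have hsetEq : {x : R | φ (Quotient.mk sd (x + a)) = φ (Quotient.mk sd x)} =
        {x : R | Quotient.mk sd (x + a) = Quotient.mk sd x} := by
      ext x
      exact φ.apply_eq_iff_eq
    rw [hsetEq, ← Nat.card_coe_set_eq]
    have key : ∀ h : ↥H, h ≠ 1 → IsUnit (((h : Rˣ) : R) - 1) := by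
      intro h hne
      exact hunit _ h.2 (fun h1 => hne (Subtype.ext h1))
    let ψ : {h : ↥H // h ≠ 1} → {x : R // Quotient.mk sd (x + a) = Quotient.mk sd x} :=
      fun h => ⟨(((key h.1 h.2).unit⁻¹ : Rˣ) : R) * a, by
        have hu1 : ((key h.1 h.2).unit : R) = ((h.1 : Rˣ) : R) - 1 :=
          (key h.1 h.2).unit_spec
        have h2 : ((key h.1 h.2).unit : R) *
            ((((key h.1 h.2).unit⁻¹ : Rˣ) : R) * a) = a := by
          rw [← mul_assoc]; simp
        rw [hu1, sub_mul, one_mul, sub_eq_iff_eq_add] at h2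
        exact Quotient.sound ⟨(h.1 : Rˣ), h.1.2, by rw [h2]; ring⟩⟩
    have hψ : Function.Bijective ψ := by
      constructor
      · intro h₁ h₂ hint
        have hx12 : (((key h₁.1 h₁.2).unit⁻¹ : Rˣ) : R) * a
            = (((key h₂.1 h₂.2).unit⁻¹ : Rˣ) : R) * a := congrArg Subtype.val hint
        have e1 : (((h₁.1 : Rˣ) : R) - 1) * ((((key h₁.1 h₁.2).unit⁻¹ : Rˣ) : R) * a)
            = a := by
          have h7 := Units.mul_inv_cancel_left (key h₁.1 h₁.2).unit a
          rwa [(key h₁.1 h₁.2).unit_spec] at h7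
        have e2 : (((h₂.1 : Rˣ) : R) - 1) * ((((key h₁.1 h₁.2).unit⁻¹ : Rˣ) : R) * a)
            = a := by
          rw [hx12]
          have h7 := Units.mul_inv_cancel_left (key h₂.1 h₂.2).unit a
          rwa [(key h₂.1 h₂.2).unit_spec] at h7
        have hx0 : (((key h₁.1 h₁.2).unit⁻¹ : Rˣ) : R) * a ≠ 0 := by
          intro h0; rw [h0, mul_zero] at e1; exact ha e1.symm
        have e3 : ((h₁.1 : Rˣ) : R) * ((((key h₁.1 h₁.2).unit⁻¹ : Rˣ) : R) * a)
            = ((h₂.1 : Rˣ) : R) * ((((key h₁.1 h₁.2).unit⁻¹ : Rˣ) : R) * a) := by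
          linear_combination e1 - e2
        have h3 : (((h₂.1⁻¹ * h₁.1 : ↥H) : Rˣ) : R) *
            ((((key h₁.1 h₁.2).unit⁻¹ : Rˣ) : R) * a)
            = (((key h₁.1 h₁.2).unit⁻¹ : Rˣ) : R) * a := by
          have h5 : (((h₂.1 : Rˣ)⁻¹ : Rˣ) : R) *
              (((h₁.1 : Rˣ) : R) * ((((key h₁.1 h₁.2).unit⁻¹ : Rˣ) : R) * a))
              = (((h₂.1 : Rˣ)⁻¹ : Rˣ) : R) *
              (((h₂.1 : Rˣ) : R) * ((((key h₁.1 h₁.2).unit⁻¹ : Rˣ) : R) * a)) := by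
            rw [e3]
          rw [Units.inv_mul_cancel_left] at h5
          push_cast
          rw [mul_assoc]
          exact h5
        have h4 := hfree _ (h₂.1⁻¹ * h₁.1 : ↥H).2 _ hx0 h3
        have h5 : h₂.1⁻¹ * h₁.1 = (1 : ↥H) := Subtype.ext h4
        exact Subtype.ext (inv_mul_eq_one.mp h5).symm
      · rintro ⟨x, hx⟩
        obtain ⟨k, hk, hkx⟩ := (heq (x + a) x).mp hx
        have hk1 : k ≠ 1 := by
          rintro rfl
          rw [Units.val_one, one_mul] at hkx
          exact ha (left_eq_add.mp hkx)
        have hne : (⟨k, hk⟩ : ↥H) ≠ 1 := fun h => hk1 (congrArg Subtype.val h)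
        refine ⟨⟨⟨k, hk⟩, hne⟩, ?_⟩
        have e1 : ((key ⟨k, hk⟩ hne).unit : R) * x = a := by
          rw [(key ⟨k, hk⟩ hne).unit_spec]
          rw [sub_mul, one_mul]
          rw [show ((⟨k, hk⟩ : ↥H) : Rˣ) = k from rfl, hkx]
          ring
        apply Subtype.ext
        show (((key ⟨k, hk⟩ hne).unit⁻¹ : Rˣ) : R) * a = x
        rw [← e1, ← mul_assoc]
        simp
    have hcard2 : Nat.card {x : R // Quotient.mk sd (x + a) = Quotient.mk sd x}
        = Nat.card {h : ↥H // h ≠ 1} := (Nat.card_eq_of_bijective ψ hψ).symm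
    have hcard3 : Nat.card {h : ↥H // h ≠ 1} = 2 * e - 1 := by
      rw [Nat.card_eq_fintype_card, Fintype.card_subtype_compl,
        Fintype.card_subtype_eq (1 : ↥H), ← Nat.card_eq_fintype_card, hcardH]
    exact hcard2.trans hcard3
end

section
/- Let m be an odd prime and R = Z_{2^m − 1}, G = ⟨2⟩ the subgroup of R^× generated by 2. Then every element of G+1 = {g+1 : g ∈ G} is invertible in Z_{2^m−1}, and consequently H = G ∪ (−G) is a subgroup of R^× of order 2m with every nonzero element of H−1 invertible. -/
/-!
Everything rests on `gcd (2 ^ a - 1) (2 ^ b - 1) = 2 ^ gcd a b - 1`. A common divisor of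
`2 ^ i + 1` and `2 ^ m - 1` divides `2 ^ (2 i) - 1`, hence `2 ^ gcd (2 i) m - 1`; as `m` is odd,
`gcd (2 i) m = gcd i m`, so it divides `2 ^ i - 1` as well, hence divides `2`, and it is odd.
For `m` prime, `2 ^ i ≠ 1` in `ZMod (2 ^ m - 1)` forces `gcd i m = 1`, so `2 ^ i - 1` is a unit,
and `-2 ^ i - 1 = -(2 ^ i + 1)` is a unit by the first part. The first part also shows
`-1 ∉ ⟨2⟩`, so `⟨2⟩ ∪ -⟨2⟩` is a disjoint union of two copies of a group of order `m`.
-/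

open Pointwise

namespace Nat

theorem odd_two_pow_sub_one {m : ℕ} (hm : m ≠ 0) : Odd (2 ^ m - 1) :=
  Even.sub_odd Nat.one_le_two_pow (even_pow.2 ⟨even_two, hm⟩) odd_one

theorem coprime_two_pow_sub_one_of_coprime {i m : ℕ} (h : Coprime i m) :
    Coprime (2 ^ i - 1) (2 ^ m - 1) := by
  rw [Coprime, pow_sub_one_gcd_pow_sub_one, h.gcd_eq_one, pow_one]

theorem coprime_two_pow_add_one_two_pow_sub_one {m : ℕ} (hm : Odd m) (i : ℕ) :
    Coprime (2 ^ i + 1) (2 ^ m - 1) := by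
  set d := gcd (2 ^ i + 1) (2 ^ m - 1)
  have hd_sq : d ∣ 2 ^ (2 * i) - 1 :=
    (gcd_dvd_left _ _).trans ⟨2 ^ i - 1, by rw [← Nat.sq_sub_sq, one_pow, ← pow_mul, mul_comm]⟩
  have hd_sub : d ∣ 2 ^ i - 1 := by
    have hd := dvd_gcd hd_sq (gcd_dvd_right _ _)
    rw [pow_sub_one_gcd_pow_sub_one, hm.coprime_two_left.gcd_mul_left_cancel] at hd
    exact hd.trans (pow_sub_one_dvd_pow_sub_one 2 (gcd_dvd_left i m))
  have hd_two : d ∣ 2 := by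
    have hd := Nat.dvd_sub (gcd_dvd_left _ _) hd_sub
    rwa [show 2 ^ i + 1 - (2 ^ i - 1) = 2 by have := @Nat.one_le_two_pow i; omega] at hd
  exact eq_one_of_dvd_coprimes (coprime_two_left.2 (odd_two_pow_sub_one hm.pos.ne')) hd_two
    (gcd_dvd_right _ _)

end Nat

theorem Units.val_mem_powers_iff {M : Type*} [Monoid M] {u x : Mˣ} :
    (u : M) ∈ Submonoid.powers (x : M) ↔ u ∈ Submonoid.powers x := by
  simp only [Submonoid.mem_powers_iff, ← Units.val_pow_eq_pow_val, Units.val_inj]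

namespace Subgroup

variable {G : Type*} [Group G] [HasDistribNeg G]

def plusMinus (K : Subgroup G) : Subgroup G where
  carrier := {g | g ∈ K ∨ -g ∈ K}
  mul_mem' := by
    rintro a b (ha | ha) (hb | hb)
    · exact Or.inl (K.mul_mem ha hb)
    · exact Or.inr (by simpa using K.mul_mem ha hb)
    · exact Or.inr (by simpa using K.mul_mem ha hb)
    · exact Or.inl (by simpa using K.mul_mem ha hb)
  one_mem' := Or.inl K.one_mem
  inv_mem' := by
    rintro g (hg | hg)
    · exact Or.inl (K.inv_mem hg)
    · exact Or.inr (by simpa [inv_neg] using K.inv_mem hg)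

theorem mem_plusMinus {K : Subgroup G} {g : G} : g ∈ K.plusMinus ↔ g ∈ K ∨ -g ∈ K :=
  Iff.rfl

theorem card_plusMinus [Finite G] {K : Subgroup G} (hK : -1 ∉ K) :
    Nat.card K.plusMinus = 2 * Nat.card K := by
  have hcoe : (K.plusMinus : Set G) = (K : Set G) ∪ -(K : Set G) := rfl
  have hdisj : Disjoint (K : Set G) (-(K : Set G)) := Set.disjoint_left.2 fun g hg hng =>
    hK (by simpa using K.mul_mem (Set.mem_neg.1 hng) (K.inv_mem hg))
  rw [← SetLike.coe_sort_coe, Nat.card_coe_set_eq, hcoe, Set.ncard_union_eq hdisj, Set.ncard_neg,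
    ← Nat.card_coe_set_eq, SetLike.coe_sort_coe, two_mul]

end Subgroup

namespace ZMod

theorem two_pow_eq_one (m : ℕ) : (2 : ZMod (2 ^ m - 1)) ^ m = 1 := by
  have h := natCast_self (2 ^ m - 1)
  rw [Nat.cast_sub Nat.one_le_two_pow] at h
  push_cast at h
  exact sub_eq_zero.1 h

theorem isUnit_two_pow_add_one {m : ℕ} (hm : Odd m) (i : ℕ) :
    IsUnit ((2 : ZMod (2 ^ m - 1)) ^ i + 1) := by
  exact_mod_cast (isUnit_iff_coprime _ _).2 (Nat.coprime_two_pow_add_one_two_pow_sub_one hm i)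

variable {m : ℕ} [Fact m.Prime]

instance fact_one_lt_two_pow_sub_one : Fact (1 < 2 ^ m - 1) :=
  ⟨by
    have := Nat.pow_le_pow_right two_pos (Fact.out : m.Prime).two_le
    omega⟩

theorem isUnit_two_pow_sub_one {i : ℕ} (h : (2 : ZMod (2 ^ m - 1)) ^ i ≠ 1) :
    IsUnit ((2 : ZMod (2 ^ m - 1)) ^ i - 1) := by
  have hmi : ¬ m ∣ i := by
    rintro ⟨k, rfl⟩
    exact h (by rw [pow_mul, two_pow_eq_one, one_pow])
  have hcop : Nat.Coprime i m := ((Nat.Prime.coprime_iff_not_dvd Fact.out).2 hmi).symm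
  have hunit := (isUnit_iff_coprime _ _).2 (Nat.coprime_two_pow_sub_one_of_coprime hcop)
  rwa [Nat.cast_sub Nat.one_le_two_pow, Nat.cast_pow, Nat.cast_ofNat, Nat.cast_one] at hunit

theorem orderOf_two : orderOf (2 : ZMod (2 ^ m - 1)) = m :=
  orderOf_eq_prime (two_pow_eq_one m) fun h =>
    one_ne_zero (α := ZMod (2 ^ m - 1)) (by linear_combination h)

end ZMod

/-- For `m` an odd prime, in `Z_{2^m - 1}` every element of `⟨2⟩ + 1` is a unit,
and `H = ⟨2⟩ ∪ (-⟨2⟩)` is a subgroup of the unit group of order `2m` with every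
nonzero element of `H - 1` a unit. -/
theorem powers_of_two_plus_one_mod_mersenne (m : ℕ) (hm : Nat.Prime m) (hodd : Odd m) :
    (∀ x ∈ Submonoid.powers (2 : ZMod (2 ^ m - 1)), IsUnit (x + 1)) ∧
    ∃ H : Subgroup (ZMod (2 ^ m - 1))ˣ,
      (H : Set (ZMod (2 ^ m - 1))ˣ) =
        {u : (ZMod (2 ^ m - 1))ˣ |
          ((u : ZMod (2 ^ m - 1)) ∈ Submonoid.powers (2 : ZMod (2 ^ m - 1))) ∨
          (-(u : ZMod (2 ^ m - 1)) ∈ Submonoid.powers (2 : ZMod (2 ^ m - 1)))} ∧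
      Nat.card H = 2 * m ∧
      ∀ h ∈ H, ((h : (ZMod (2 ^ m - 1))ˣ) : ZMod (2 ^ m - 1)) - 1 ≠ 0 →
        IsUnit (((h : (ZMod (2 ^ m - 1))ˣ) : ZMod (2 ^ m - 1)) - 1) := by
  have := Fact.mk hm
  have hunit : ∀ x ∈ Submonoid.powers (2 : ZMod (2 ^ m - 1)), IsUnit (x + 1) := by
    rintro _ ⟨i, rfl⟩
    exact ZMod.isUnit_two_pow_add_one hodd i
  obtain ⟨u, hu⟩ := IsUnit.of_pow_eq_one (ZMod.two_pow_eq_one m) hm.ne_zero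
  have hval (v : (ZMod (2 ^ m - 1))ˣ) :
      (v : ZMod (2 ^ m - 1)) ∈ Submonoid.powers 2 ↔ v ∈ Subgroup.zpowers u := by
    rw [← hu, Units.val_mem_powers_iff, (isOfFinOrder_of_finite u).mem_powers_iff_mem_zpowers]
  have hneg : -1 ∉ Subgroup.zpowers u := fun h => by
    simpa using hunit _ ((hval (-1)).2 h)
  refine ⟨hunit, (Subgroup.zpowers u).plusMinus, ?_, ?_, ?_⟩
  · ext v
    simp only [SetLike.mem_coe, Subgroup.mem_plusMinus, Set.mem_ofPred_eq, hval, ← Units.val_neg]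
  · rw [Subgroup.card_plusMinus hneg, Nat.card_zpowers, ← orderOf_units, hu, ZMod.orderOf_two]
  · rintro v (hv | hv) hne
    · obtain ⟨i, hi⟩ := (hval v).2 hv
      rw [← hi] at hne ⊢
      exact ZMod.isUnit_two_pow_sub_one (sub_ne_zero.1 hne)
    · obtain ⟨i, hi⟩ := (hval (-v)).2 hv
      rw [Units.val_neg] at hi
      rw [show (v : ZMod (2 ^ m - 1)) - 1 = -(2 ^ i + 1) by linear_combination hi]
      exact (ZMod.isUnit_two_pow_add_one hodd i).neg
end

section
/- Let s be a prime, b ≥ 2 an integer with gcd(s, b−1) = 1, and set N = (b^s − 1)/(b − 1). Then in the ring Z_N, the subgroup G = ⟨b⟩ of Z_N^× generated by b has order s, and every nonzero element of G−1 = {g−1 : g ∈ G} is invertible in Z_N. -/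
lemma repunit_lower (s b : ℕ) (hs : 2 ≤ s) (hb : 2 ≤ b) :
    b < (b ^ s - 1) / (b - 1) := by
  have hdvd : (b - 1) ∣ b ^ s - 1 := by
    simpa using Nat.sub_dvd_pow_sub_pow b 1 s
  have hmul : (b ^ s - 1) / (b - 1) * (b - 1) = b ^ s - 1 := Nat.div_mul_cancel hdvd
  by_contra h
  push_neg at h
  have h2 : b ^ s - 1 ≤ b * (b - 1) := by
    rw [← hmul]
    exact Nat.mul_le_mul_right _ h
  have h3 : b * b ≤ b ^ s := by
    calc b * b = b ^ 2 := (sq b).symm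
    _ ≤ b ^ s := Nat.pow_le_pow_right (by omega) hs
  have h4 : b * (b - 1) = b * b - b := by
    rw [Nat.mul_sub, Nat.mul_one]
  rw [h4] at h2
  have h5 : b ≤ b * b := Nat.le_mul_of_pos_left b (by omega)
  omega

lemma repunit_geom (s b : ℕ) (hb : 2 ≤ b) :
    ((((b : ℕ) ^ s - 1) / (b - 1) : ℕ) : ℤ) = ∑ i ∈ Finset.range s, (b : ℤ) ^ i := by
  have hdvd : (b - 1) ∣ b ^ s - 1 := by
    simpa using Nat.sub_dvd_pow_sub_pow b 1 s
  have hmul : (b ^ s - 1) / (b - 1) * (b - 1) = b ^ s - 1 := Nat.div_mul_cancel hdvd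
  have hb1 : (1 : ℕ) ≤ b := by omega
  have hbs : (1 : ℕ) ≤ b ^ s := Nat.one_le_pow _ _ (by omega)
  have hz : ((((b : ℕ) ^ s - 1) / (b - 1) : ℕ) : ℤ) * ((b : ℤ) - 1) = (b : ℤ) ^ s - 1 := by
    have := congrArg (fun n : ℕ => (n : ℤ)) hmul
    push_cast [Nat.cast_sub hb1, Nat.cast_sub hbs] at this
    exact_mod_cast this
  have hgeom : (∑ i ∈ Finset.range s, (b : ℤ) ^ i) * ((b : ℤ) - 1) = (b : ℤ) ^ s - 1 :=
    geom_sum_mul _ _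
  have hne : ((b : ℤ) - 1) ≠ 0 := by
    have : (2 : ℤ) ≤ (b : ℤ) := by exact_mod_cast hb
    omega
  exact mul_right_cancel₀ hne (hz.trans hgeom.symm)

lemma repunit_coprime (s b k : ℕ) (hs : Nat.Prime s) (hb : 2 ≤ b)
    (hgcd : Nat.gcd s (b - 1) = 1) (hk : 0 < k) (hks : k < s) :
    Nat.Coprime (b ^ k - 1) ((b ^ s - 1) / (b - 1)) := by
  set N := (b ^ s - 1) / (b - 1) with hN
  by_contra h
  obtain ⟨p, hp, hpk, hpN⟩ := Nat.Prime.not_coprime_iff_dvd.mp h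
  have hdvd : (b - 1) ∣ b ^ s - 1 := by
    simpa using Nat.sub_dvd_pow_sub_pow b 1 s
  have hNs : N ∣ b ^ s - 1 := Nat.div_dvd_of_dvd hdvd
  have hps : p ∣ b ^ s - 1 := hpN.trans hNs
  haveI : Fact p.Prime := ⟨hp⟩
  have hb1 : (1 : ℕ) ≤ b := by omega
  have h1 : (b : ZMod p) ^ k = 1 := by
    have h0 := (ZMod.natCast_eq_zero_iff _ _).mpr hpk
    push_cast [Nat.cast_sub (Nat.one_le_pow k b (by omega))] at h0
    linear_combination h0
  have h2 : (b : ZMod p) ^ s = 1 := by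
    have h0 := (ZMod.natCast_eq_zero_iff _ _).mpr hps
    push_cast [Nat.cast_sub (Nat.one_le_pow s b (by omega))] at h0
    linear_combination h0
  have hgk : Nat.gcd k s = 1 := by
    have : ¬ s ∣ k := fun hd => by
      have := Nat.le_of_dvd hk hd; omega
    have := (Nat.Prime.coprime_iff_not_dvd hs).mpr this
    simpa [Nat.coprime_comm] using this.symm
  have hord : orderOf (b : ZMod p) ∣ 1 := by
    rw [← hgk]
    exact Nat.dvd_gcd (orderOf_dvd_of_pow_eq_one h1) (orderOf_dvd_of_pow_eq_one h2)
  have hbone : (b : ZMod p) = 1 := orderOf_eq_one_iff.mp (Nat.dvd_one.mp hord)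
  have hpb1 : p ∣ b - 1 := by
    rw [← ZMod.natCast_eq_zero_iff]
    push_cast [Nat.cast_sub hb1]
    rw [hbone]; ring
  have hNgeom := repunit_geom s b hb
  have hsN : ((s : ℕ) : ZMod p) = 0 := by
    have h0 : ((N : ℕ) : ZMod p) = 0 := (ZMod.natCast_eq_zero_iff _ _).mpr hpN
    have h1 : ((N : ℤ) : ZMod p) = ((∑ i ∈ Finset.range s, (b : ℤ) ^ i : ℤ) : ZMod p) := by
      exact_mod_cast congrArg (fun z : ℤ => (z : ZMod p)) hNgeom
    push_cast at h1
    rw [h0] at h1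
    simp [hbone] at h1
    exact h1.symm
  have hpdvds : p ∣ s := (ZMod.natCast_eq_zero_iff _ _).mp hsN
  have hpeq : p = s := (Nat.prime_dvd_prime_iff_eq hp hs).mp hpdvds
  have : p ∣ Nat.gcd s (b - 1) := Nat.dvd_gcd (hpeq ▸ dvd_rfl) hpb1
  rw [hgcd] at this
  exact hp.one_lt.ne' (Nat.dvd_one.mp this)

/-- For `s` prime, `b ≥ 2` with `gcd(s, b-1) = 1`, and `N = (b^s - 1)/(b-1)`,
the element `b` is a unit of `Z_N` of multiplicative order `s`, and every nonzero
element of `⟨b⟩ - 1` is a unit of `Z_N`. -/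
theorem powers_of_b_mod_repunit (s b : ℕ) (hs : Nat.Prime s) (hb : 2 ≤ b)
    (hgcd : Nat.gcd s (b - 1) = 1) :
    IsUnit ((b : ℕ) : ZMod ((b ^ s - 1) / (b - 1))) ∧
    orderOf ((b : ℕ) : ZMod ((b ^ s - 1) / (b - 1))) = s ∧
    ∀ x ∈ Submonoid.powers ((b : ℕ) : ZMod ((b ^ s - 1) / (b - 1))),
      x - 1 ≠ 0 → IsUnit (x - 1) := by
  set N := (b ^ s - 1) / (b - 1) with hNdef
  have hs2 := hs.two_le
  have hbN : b < N := repunit_lower s b hs2 hb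
  haveI : NeZero N := ⟨by omega⟩
  have hdvd : (b - 1) ∣ b ^ s - 1 := by
    simpa using Nat.sub_dvd_pow_sub_pow b 1 s
  have hNs : N ∣ b ^ s - 1 := Nat.div_dvd_of_dvd hdvd
  have hpow : (b : ZMod N) ^ s = 1 := by
    have h0 := (ZMod.natCast_eq_zero_iff _ _).mpr hNs
    push_cast [Nat.cast_sub (Nat.one_le_pow s b (by omega))] at h0
    linear_combination h0
  have hbne1 : (b : ZMod N) ≠ 1 := by
    intro h
    have h0 : ((b - 1 : ℕ) : ZMod N) = 0 := by
      push_cast [Nat.cast_sub (by omega : 1 ≤ b)]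
      rw [h]; ring
    have hd := (ZMod.natCast_eq_zero_iff _ _).mp h0
    have := Nat.le_of_dvd (by omega) hd
    omega
  have hunit : IsUnit ((b : ℕ) : ZMod N) := IsUnit.of_pow_eq_one hpow (by omega)
  haveI : Fact s.Prime := ⟨hs⟩
  have hord : orderOf ((b : ℕ) : ZMod N) = s := orderOf_eq_prime hpow hbne1
  refine ⟨hunit, hord, ?_⟩
  rintro x ⟨k, rfl⟩ hne
  simp only at hne ⊢
  have hrk : ((b : ℕ) : ZMod N) ^ (k % s) = ((b : ℕ) : ZMod N) ^ k := by
    conv_rhs => rw [← Nat.div_add_mod k s]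
    rw [pow_add, pow_mul, hpow, one_pow, one_mul]
  have hr0 : k % s ≠ 0 := by
    intro h
    rw [h, pow_zero] at hrk
    rw [← hrk] at hne
    simp at hne
  have hrs : k % s < s := Nat.mod_lt _ (by omega)
  have hcast : ((b : ℕ) : ZMod N) ^ k - 1 = ((b ^ (k % s) - 1 : ℕ) : ZMod N) := by
    rw [← hrk]
    push_cast [Nat.cast_sub (Nat.one_le_pow _ b (by omega))]
    ring
  rw [hcast]
  exact (ZMod.isUnit_iff_coprime _ N).mpr
    (repunit_coprime s b (k % s) hs hb hgcd (Nat.pos_of_ne_zero hr0) hrs)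
end

section
/- Let s be an odd prime, b ≥ 2 with gcd(s, b−1) = 1, and N = (b^s − 1)/(b − 1). Then in Z_N, for G = ⟨b⟩, every element of G+1 = {b^i + 1 : 0 ≤ i < s} is invertible in Z_N, and hence there exists an (N, (N−1)/(2s) + 1, 2s−1) zero-difference balanced function on (Z_N, +). -/
/-!
Write `N = 1 + b + ⋯ + b^(s-1)`. For a divisor `n ≠ 1` of `N` we have `b^s ≡ 1 (mod n)`, and
`b ≡ 1` would force `n ∣ gcd(s, b - 1)`; so `b` has order exactly `s` modulo `n`. In particular
`2 ∤ N` (modulo `2` the order of a unit is `1`), hence `-1 ≢ 1`, `-b` has order `2s` and `b^i ≢ -1`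
modulo `n`. Taking for `n` the prime divisors of `N` shows that `b^i + 1`, and `(-b)^k - 1` whenever
`(-b)^k ≠ 1`, are units of `ℤ/N`.

If `H` is a group of units of a finite ring `R` such that `h - 1` is a unit for every `h ≠ 1` in
`H`, then `H` acts freely on `R ∖ {0}`, so by Burnside there are `(|R| - 1)/|H| + 1` orbits, and for
`a ≠ 0` the solutions of `x + a ∈ H x` are the `|H| - 1` elements `(h - 1)⁻¹ a`, `h ∈ H ∖ {1}`.
Thus labelling the `H`-orbits is a `(|R|, (|R| - 1)/|H| + 1, |H| - 1)` ZDB function; take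
`H = ⟨-b⟩` in `ℤ/N`.
-/

section OrbitFunction

open MulAction

variable {R : Type*} [CommRing R] {H : Subgroup Rˣ}
  (hH : ∀ h ∈ H, h ≠ 1 → IsUnit ((h : R) - 1))
include hH

lemma smul_eq_add_iff_of_isUnit_sub_one {h : H} (h1 : h ≠ 1) (x a : R) :
    h • x = x + a ↔ x = Ring.inverse (((h : Rˣ) : R) - 1) * a := by
  obtain ⟨u, hu⟩ := hH h h.2 (by simpa using h1)
  rw [← hu, Ring.inverse_unit, Units.eq_inv_mul_iff_mul_eq, hu, sub_mul, one_mul,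
    sub_eq_iff_eq_add']
  rfl

lemma fixedBy_eq_singleton_zero_of_isUnit_sub_one {h : H} (h1 : h ≠ 1) :
    fixedBy R h = {0} := by
  ext x
  simpa using smul_eq_add_iff_of_isUnit_sub_one hH h1 x 0

lemma smul_left_injective_of_isUnit_sub_one {x : R} (hx : x ≠ 0) :
    Function.Injective fun h : H ↦ h • x := by
  intro h h' hh
  by_contra hne
  refine hx (Set.mem_singleton_iff.1 ?_)
  have h1 : h'⁻¹ * h ≠ 1 := by simpa [inv_mul_eq_one, eq_comm] using hne
  rw [← fixedBy_eq_singleton_zero_of_isUnit_sub_one hH h1, mem_fixedBy, mul_smul]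
  exact inv_smul_eq_iff.2 hh

lemma card_orbitRel_quotient_of_isUnit_sub_one [Finite R] :
    Nat.card (orbitRel.Quotient H R) = (Nat.card R - 1) / Nat.card H + 1 := by
  classical
  have := Fintype.ofFinite R
  have hfix : ∀ h : H, Fintype.card (fixedBy R h) = if h = 1 then Nat.card R else 1 := by
    intro h
    split_ifs with h1
    · simp [h1, Nat.card_eq_fintype_card]
    · simp [fixedBy_eq_singleton_zero_of_isUnit_sub_one hH h1]
  have burnside := sum_card_fixedBy_eq_card_orbits_mul_card_group H R
  rw [Fintype.sum_congr _ _ hfix, ← Finset.add_sum_erase _ _ (Finset.mem_univ 1), if_pos rfl,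
    Finset.sum_congr rfl fun h hh ↦ if_neg (Finset.ne_of_mem_erase hh)] at burnside
  simp only [Finset.sum_const, Finset.card_erase_of_mem (Finset.mem_univ _), smul_eq_mul,
    mul_one, Finset.card_univ, ← Nat.card_eq_fintype_card] at burnside
  set c := Nat.card (orbitRel.Quotient H R)
  have hH0 : 0 < Nat.card H := Nat.card_pos
  have hc : 0 < c := Nat.pos_of_ne_zero fun hc ↦ by simp [hc] at burnside
  have hR : Nat.card R - 1 = (c - 1) * Nat.card H := by rw [Nat.sub_one_mul]; omega
  rw [hR, Nat.mul_div_cancel _ hH0, Nat.sub_add_cancel hc]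

lemma ncard_setOf_add_mem_orbit_of_isUnit_sub_one [Finite R] {a : R} (ha : a ≠ 0) :
    {x : R | x + a ∈ orbit H x}.ncard = Nat.card H - 1 := by
  set g : {h : H // h ≠ 1} → R := fun h ↦ Ring.inverse (((h.1 : Rˣ) : R) - 1) * a
  have hg : ∀ h : {h : H // h ≠ 1}, h.1 • g h = g h + a := fun h ↦
    (smul_eq_add_iff_of_isUnit_sub_one hH h.2 _ a).2 rfl
  have hset : {x : R | x + a ∈ orbit H x} = Set.range g := by
    ext x
    simp only [Set.mem_ofPred_eq, mem_orbit_iff, Set.mem_range]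
    constructor
    · rintro ⟨h, hx⟩
      have h1 : h ≠ 1 := by
        rintro rfl
        exact ha (by simpa using hx)
      exact ⟨⟨h, h1⟩, ((smul_eq_add_iff_of_isUnit_sub_one hH h1 x a).1 hx).symm⟩
    · rintro ⟨h, rfl⟩
      exact ⟨h.1, hg h⟩
  have hinj : Function.Injective g := by
    intro h h' hgg
    have hne : g h ≠ 0 := fun h0 ↦ ha (by simpa [h0] using (hg h).symm)
    exact Subtype.ext (smul_left_injective_of_isUnit_sub_one hH hne <|
      show h.1 • g h = h'.1 • g h by rw [hg, hgg, hg])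
  classical
  have := Fintype.ofFinite H
  rw [hset, ← Nat.card_coe_set_eq, Nat.card_range_of_injective hinj, Nat.card_eq_fintype_card,
    Fintype.card_subtype_compl, Fintype.card_subtype_eq, Nat.card_eq_fintype_card]

theorem exists_isZDB_of_isUnit_sub_one [Finite R] :
    ∃ f : R → ZMod ((Nat.card R - 1) / Nat.card H + 1),
      IsZDB f (Nat.card R) ((Nat.card R - 1) / Nat.card H + 1) (Nat.card H - 1) := by
  obtain ⟨e⟩ : Nonempty (orbitRel.Quotient H R ≃ ZMod ((Nat.card R - 1) / Nat.card H + 1)) :=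
    Finite.card_eq.1 (by rw [Nat.card_zmod, card_orbitRel_quotient_of_isUnit_sub_one hH])
  refine ⟨e ∘ Quotient.mk'', rfl, ?_, fun a ha ↦ ?_⟩
  · rw [(e.surjective.comp Quotient.mk''_surjective).range_eq, Set.ncard_univ, Nat.card_zmod]
  · simp only [Function.comp_apply, e.injective.eq_iff, Quotient.eq'', orbitRel_apply]
    exact ncard_setOf_add_mem_orbit_of_isUnit_sub_one hH ha

end OrbitFunction

lemma orderOf_neg_eq_two_mul {R : Type*} [Ring R] (h : (-1 : R) ≠ 1) {x : R}
    (hx : Odd (orderOf x)) : orderOf (-x) = 2 * orderOf x := by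
  have h2 : orderOf (-1 : R) = 2 := orderOf_eq_prime (by simp) h
  rw [← neg_one_mul, (Commute.neg_one_left x).orderOf_mul_eq_mul_orderOf_of_coprime
    (h2 ▸ hx.coprime_two_left), h2]

lemma pow_ne_neg_one_of_odd_orderOf {R : Type*} [Ring R] (h : (-1 : R) ≠ 1) {x : R}
    (hx : Odd (orderOf x)) (i : ℕ) : x ^ i ≠ -1 := by
  intro hi
  have hdvd : orderOf x ∣ i := hx.coprime_two_right.dvd_of_dvd_mul_left <|
    orderOf_dvd_of_pow_eq_one (by rw [mul_comm, pow_mul, hi, neg_one_sq])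
  exact h (hi ▸ orderOf_dvd_iff_pow_eq_one.1 hdvd)

namespace ZMod

lemma isUnit_of_forall_castHom_ne_zero {N : ℕ} [NeZero N] {x : ZMod N}
    (hx : ∀ p, p.Prime → ∀ hp : p ∣ N, castHom hp (ZMod p) x ≠ 0) : IsUnit x := by
  rw [← natCast_zmod_val x, isUnit_iff_coprime]
  refine Nat.coprime_of_dvd fun p hp hpx hpN ↦ hx p hp hpN ?_
  rwa [← natCast_zmod_val x, map_natCast, natCast_eq_zero_iff]

lemma isUnit_pow_sub_one_of_forall_orderOf_castHom {N : ℕ} [NeZero N] {x : ZMod N}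
    (hx : ∀ p, p.Prime → ∀ hp : p ∣ N, orderOf (castHom hp (ZMod p) x) = orderOf x)
    {k : ℕ} (hk : x ^ k ≠ 1) : IsUnit (x ^ k - 1) := by
  refine isUnit_of_forall_castHom_ne_zero fun p hp hpN ↦ ?_
  rwa [map_sub, map_pow, map_one, sub_ne_zero, Ne, ← orderOf_dvd_iff_pow_eq_one, hx p hp hpN,
    orderOf_dvd_iff_pow_eq_one]

end ZMod

section Repunit

open Finset

variable {s b n : ℕ}

lemma natCast_pow_eq_one_of_dvd_geom_sum (hn : n ∣ ∑ i ∈ range s, b ^ i) :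
    (b : ZMod n) ^ s = 1 := by
  have h0 : ∑ i ∈ range s, (b : ZMod n) ^ i = 0 := by
    exact_mod_cast (ZMod.natCast_eq_zero_iff _ _).2 hn
  rw [← sub_eq_zero, ← geom_sum_mul, h0, zero_mul]

lemma orderOf_natCast_of_dvd_geom_sum (hs : s.Prime) (hgcd : s.gcd (b - 1) = 1) (hn1 : n ≠ 1)
    (hn : n ∣ ∑ i ∈ range s, b ^ i) : orderOf (b : ZMod n) = s := by
  refine (hs.eq_one_or_self_of_dvd _ (orderOf_dvd_of_pow_eq_one
    (natCast_pow_eq_one_of_dvd_geom_sum hn))).resolve_left fun h1 ↦ hn1 ?_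
  have hb1 : (b : ZMod n) = 1 := orderOf_eq_one_iff.1 h1
  have hs0 : ((s : ℕ) : ZMod n) = 0 := by
    simpa [hb1] using (ZMod.natCast_eq_zero_iff _ _).2 hn
  have hb0 : ((b - 1 : ℕ) : ZMod n) = 0 := by
    rcases b with _ | b
    · simp
    · simpa using hb1
  rw [ZMod.natCast_eq_zero_iff] at hs0 hb0
  exact Nat.dvd_one.1 (hgcd ▸ Nat.dvd_gcd hs0 hb0)

lemma two_lt_of_dvd_geom_sum (hs : s.Prime) (hgcd : s.gcd (b - 1) = 1) (hn1 : n ≠ 1)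
    (hn : n ∣ ∑ i ∈ range s, b ^ i) : 2 < n := by
  have hn0 : n ≠ 0 := by
    rintro rfl
    have := single_le_sum (f := (b ^ ·)) (fun _ _ ↦ Nat.zero_le _) (mem_range.2 hs.pos)
    simp [zero_dvd_iff.1 hn] at this
  have hn2 : n ≠ 2 := by
    rintro rfl
    have hb0 : (b : ZMod 2) ≠ 0 := fun h ↦ by
      simpa [h, hs.ne_zero] using natCast_pow_eq_one_of_dvd_geom_sum hn
    have hdvd := ZMod.orderOf_dvd_card_sub_one hb0
    rw [orderOf_natCast_of_dvd_geom_sum hs hgcd (by decide) hn] at hdvd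
    exact hs.one_lt.ne' (Nat.dvd_one.1 hdvd)
  omega

lemma orderOf_neg_natCast_of_dvd_geom_sum (hs : s.Prime) (hsodd : Odd s)
    (hgcd : s.gcd (b - 1) = 1) (hn1 : n ≠ 1) (hn : n ∣ ∑ i ∈ range s, b ^ i) :
    orderOf (-(b : ZMod n)) = 2 * s := by
  have : Fact (2 < n) := ⟨two_lt_of_dvd_geom_sum hs hgcd hn1 hn⟩
  have hord := orderOf_natCast_of_dvd_geom_sum hs hgcd hn1 hn
  rw [orderOf_neg_eq_two_mul ZMod.neg_one_ne_one (hord ▸ hsodd), hord]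

lemma natCast_pow_ne_neg_one_of_dvd_geom_sum (hs : s.Prime) (hsodd : Odd s)
    (hgcd : s.gcd (b - 1) = 1) (hn1 : n ≠ 1) (hn : n ∣ ∑ i ∈ range s, b ^ i) (i : ℕ) :
    (b : ZMod n) ^ i ≠ -1 := by
  have : Fact (2 < n) := ⟨two_lt_of_dvd_geom_sum hs hgcd hn1 hn⟩
  exact pow_ne_neg_one_of_odd_orderOf ZMod.neg_one_ne_one
    (orderOf_natCast_of_dvd_geom_sum hs hgcd hn1 hn ▸ hsodd) i

end Repunit

/-- For `s` an odd prime, `b ≥ 2` with `gcd(s, b-1) = 1`, and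
`N = (b^s - 1)/(b-1)`, every element of `⟨b⟩ + 1` is a unit of `Z_N`, and
there is an `(N, (N-1)/(2s)+1, 2s-1)` ZDB function on `Z_N`. -/
theorem zdb_mod_repunit (s b : ℕ) (hs : Nat.Prime s) (hsodd : Odd s) (hb : 2 ≤ b)
    (hgcd : Nat.gcd s (b - 1) = 1) :
    (∀ x ∈ Submonoid.powers ((b : ℕ) : ZMod ((b ^ s - 1) / (b - 1))),
      IsUnit (x + 1)) ∧
    ∃ f : ZMod ((b ^ s - 1) / (b - 1)) →
        ZMod (((b ^ s - 1) / (b - 1) - 1) / (2 * s) + 1),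
      IsZDB f ((b ^ s - 1) / (b - 1))
        (((b ^ s - 1) / (b - 1) - 1) / (2 * s) + 1) (2 * s - 1) := by
  generalize hN : (b ^ s - 1) / (b - 1) = N
  rw [← Nat.geomSum_eq hb] at hN
  have hN1 : 1 < N := hN ▸ calc
    1 < ∑ i ∈ Finset.range 2, b ^ i := by simp only [Finset.sum_range_succ,
      Finset.sum_range_zero, pow_zero, pow_one]; omega
    _ ≤ ∑ i ∈ Finset.range s, b ^ i :=
      Finset.sum_le_sum_of_subset (Finset.range_subset_range.2 hs.two_le)
  have : NeZero N := ⟨by omega⟩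
  have hord (n : ℕ) (hn1 : n ≠ 1) (hn : n ∣ N) : orderOf (-(b : ZMod n)) = 2 * s :=
    orderOf_neg_natCast_of_dvd_geom_sum hs hsodd hgcd hn1 (hN ▸ hn)
  refine ⟨?_, ?_⟩
  · rintro _ ⟨i, rfl⟩
    refine ZMod.isUnit_of_forall_castHom_ne_zero fun p hp hpN ↦ ?_
    rw [map_add, map_pow, map_natCast, map_one, Ne, add_eq_zero_iff_eq_neg]
    exact natCast_pow_ne_neg_one_of_dvd_geom_sum hs hsodd hgcd hp.one_lt.ne' (hN ▸ hpN) i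
  · have hu : IsUnit (-(b : ZMod N)) :=
      (orderOf_pos_iff.1 (by rw [hord N hN1.ne' dvd_rfl]; exact Nat.mul_pos two_pos hs.pos)).isUnit
    have hcard : Nat.card (Subgroup.zpowers hu.unit) = 2 * s := by
      rw [Nat.card_zpowers, ← orderOf_units, hu.unit_spec, hord N hN1.ne' dvd_rfl]
    have hzdb := exists_isZDB_of_isUnit_sub_one (H := Subgroup.zpowers hu.unit) ?_
    · rwa [Nat.card_zmod, hcard] at hzdb
    · intro h hh hne
      obtain ⟨k, rfl⟩ : ∃ k : ℕ, hu.unit ^ k = h := mem_powers_iff_mem_zpowers.2 hh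
      rw [Ne, ← Units.val_eq_one, Units.val_pow_eq_pow_val, hu.unit_spec] at hne
      rw [Units.val_pow_eq_pow_val, hu.unit_spec]
      refine ZMod.isUnit_pow_sub_one_of_forall_orderOf_castHom (fun p hp hpN ↦ ?_) hne
      rw [map_neg, map_natCast, hord p hp.one_lt.ne' hpN, hord N hN1.ne' dvd_rfl]
end

section
/- Let f: A → B be the (en, m+1, e−2) zero-difference balanced function constructed in Theorem 1 (from R of order n and subgroups G, H with |G| = e, |H| = e−1), where m = (en−1)/(e−1). For b ∈ Im(f) let w_b = |f^{−1}(b)|. Then the multiset {w_b : b ∈ Im(f)} equals {1} together with m copies of e−1. -/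
/-!
Because `k - 1` is a unit for every `k ≠ 1` in `G` or `H`, the equation `k r = r + t` has the
unique solution `r = (k - 1)⁻¹ t`; in particular `H` acts freely on `R ∖ {0}`. So the fibres of
`f₁` are `{(0, 1)}`, `{(0, x) : x ≠ 1}`, the `H`-orbits `{(h r, 1)}` with `r ≠ 0` and the sets
`{(x⁻¹ s, x) : x ≠ 1}` with `s ≠ 0`, all but the first of size `e - 1`. For `a = (s, g) ≠ 0`, the
solutions of `f (z + a) = f z` are the `(r, 1)` with `r = (h - 1)⁻¹ s`, `h ∈ H ∖ {1}`, if `g = 1`,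
and the `(r₀, x)` with `g (r₀ + s) = r₀` and `x ∉ {1, g⁻¹}` otherwise: `e - 2` in both cases.
Counting fibres gives `e n = 1 + (|Im f| - 1)(e - 1)`.
-/

open Set Function MulAction

theorem card_eq_one_add_mul_of_ncard_fibers {α β : Type*} [Finite α] (f : α → β) (b₀ : β) (k : ℕ)
    (h₀ : (f ⁻¹' {b₀}).ncard = 1) (h : ∀ b ∈ range f, b ≠ b₀ → (f ⁻¹' {b}).ncard = k) :
    Nat.card α = 1 + ((range f).ncard - 1) * k := by
  classical
  have := Fintype.ofFinite α
  have hfib : ∀ b, (f ⁻¹' {b}).ncard = (Finset.univ.filter fun a => f a = b).card := by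
    intro b
    rw [← ncard_coe_finset]
    congr
    ext
    simp
  have hrange : (range f).ncard = (Finset.univ.image f).card := by
    rw [← ncard_coe_finset, Finset.coe_image, Finset.coe_univ, image_univ]
  have hb₀ : b₀ ∈ Finset.univ.image f := by
    obtain ⟨a, ha⟩ := nonempty_of_ncard_ne_zero (h₀ ▸ one_ne_zero)
    exact Finset.mem_image.2 ⟨a, Finset.mem_univ a, ha⟩
  rw [Nat.card_eq_fintype_card, ← Finset.card_univ, Finset.card_eq_sum_card_image f,
    ← Finset.add_sum_erase _ _ hb₀, ← hfib, h₀, Finset.sum_congr rfl (g := fun _ => k),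
    Finset.sum_const, Finset.card_erase_of_mem hb₀, smul_eq_mul, hrange]
  intro b hb
  rw [← hfib]
  exact h b (by simpa [hrange] using Finset.mem_of_mem_erase hb) (Finset.ne_of_mem_erase hb)

theorem IsZDB.exists_ker_eq_of_card_eq {α β γ : Type*} [AddGroup α] [Finite α] [Finite γ]
    {f : α → β} {N m lam : ℕ} (hf : IsZDB f N m lam) (hγ : Nat.card γ = m) :
    ∃ g : α → γ, IsZDB g N m lam ∧ ∀ x y, g x = g y ↔ f x = f y := by
  obtain ⟨e⟩ := Finite.card_eq.1 ((Nat.card_coe_set_eq _).trans (hf.2.1.trans hγ.symm))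
  have hker : ∀ x y, e (rangeFactorization f x) = e (rangeFactorization f y) ↔ f x = f y := by
    simp [rangeFactorization, Subtype.ext_iff]
  refine ⟨e ∘ rangeFactorization f, ⟨hf.1, ?_, fun a ha => ?_⟩, hker⟩
  · rw [(e.surjective.comp rangeFactorization_surjective).range_eq, ncard_univ, hγ]
  · simp only [comp_apply, hker]
    exact hf.2.2 a ha

section UnitSubgroup

variable {R : Type*} [CommRing R] {K : Subgroup Rˣ}

theorem isUnit_coe_sub_one (hK : ∀ g ∈ K, (g : R) - 1 ≠ 0 → IsUnit ((g : R) - 1))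
    {k : K} (hk : k ≠ 1) : IsUnit (((k : Rˣ) : R) - 1) :=
  hK k k.2 (sub_ne_zero.2 fun h => hk (Subtype.ext (Units.ext h)))

theorem smul_eq_self_add_iff (hK : ∀ g ∈ K, (g : R) - 1 ≠ 0 → IsUnit ((g : R) - 1))
    {k : K} (hk : k ≠ 1) {r s : R} :
    k • r = r + s ↔ r = Ring.inverse (((k : Rˣ) : R) - 1) * s := by
  rw [eq_comm (b := _ * s), Ring.inverse_mul_eq_iff_eq_mul _ _ _ (isUnit_coe_sub_one hK hk),
    Subgroup.smul_def, Units.smul_def, smul_eq_mul, sub_one_mul, eq_sub_iff_add_eq, add_comm,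
    eq_comm]

theorem eq_one_of_smul_eq_self (hK : ∀ g ∈ K, (g : R) - 1 ≠ 0 → IsUnit ((g : R) - 1))
    {k : K} {r : R} (hr : r ≠ 0) (h : k • r = r) : k = 1 := by
  by_contra hk
  exact hr (by simpa using (smul_eq_self_add_iff hK hk (s := 0)).1 (by rwa [add_zero]))

theorem smul_left_injective_of_ne_zero (hK : ∀ g ∈ K, (g : R) - 1 ≠ 0 → IsUnit ((g : R) - 1))
    {r : R} (hr : r ≠ 0) : Injective fun k : K => k • r := by
  intro k k' h
  have : (k'⁻¹ * k) • r = r := by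
    rw [mul_smul]
    simp_all
  simpa [inv_mul_eq_one, eq_comm] using eq_one_of_smul_eq_self hK hr this

theorem ncard_orbit_of_ne_zero (hK : ∀ g ∈ K, (g : R) - 1 ≠ 0 → IsUnit ((g : R) - 1))
    {r : R} (hr : r ≠ 0) : (orbit K r).ncard = Nat.card K :=
  ncard_range_of_injective (smul_left_injective_of_ne_zero hK hr)

theorem ncard_setOf_add_mem_orbit (hK : ∀ g ∈ K, (g : R) - 1 ≠ 0 → IsUnit ((g : R) - 1))
    [Finite K] {s : R} (hs : s ≠ 0) : {r | r + s ∈ orbit K r}.ncard = Nat.card K - 1 := by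
  set ρ : K → R := fun k => Ring.inverse (((k : Rˣ) : R) - 1) * s
  have hρ : ∀ {k : K}, k ≠ 1 → k • ρ k = ρ k + s := fun hk => (smul_eq_self_add_iff hK hk).2 rfl
  have hset : {r | r + s ∈ orbit K r} = ρ '' {1}ᶜ := by
    ext r
    simp only [mem_ofPred_eq, mem_orbit_iff, mem_image, mem_compl_singleton_iff]
    constructor
    · rintro ⟨k, hk⟩
      have hk1 : k ≠ 1 := by
        rintro rfl
        exact hs (by simpa using hk)
      exact ⟨k, hk1, ((smul_eq_self_add_iff hK hk1).1 hk).symm⟩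
    · rintro ⟨k, hk1, rfl⟩
      exact ⟨k, hρ hk1⟩
  have hinj : InjOn ρ {1}ᶜ := by
    intro k hk k' hk' h
    have hr : ρ k ≠ 0 := fun h0 => hs (by simpa [h0, eq_comm] using hρ hk)
    exact smul_left_injective_of_ne_zero hK hr ((hρ hk).trans (h ▸ (hρ hk').symm))
  rw [hset, hinj.ncard_image, ncard_compl, ncard_singleton]

end UnitSubgroup

section ZDBFunction

variable {R : Type*} [CommRing R] (G H : Subgroup Rˣ)

open Classical in
/-- The paper's `f₁` with relabelled values: writing `r = ρ c` with `ρ = RI_{L_G*}(r)` and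
`c = CI_{L_G*}(r)`, its value `(ρ, x c)` corresponds to `x r = ρ (x c)`, while `orbit H 0` and
`0 ∈ R` stand for its values `0` and `(0, 1)`. -/
noncomputable def zdbFun : R × Additive G → Set R ⊕ R := fun p =>
  if p.2 = 0 then .inl (orbit H p.1) else .inr (p.2.toMul • p.1)

theorem zdbFun_preimage_inl (r : R) :
    zdbFun G H ⁻¹' {.inl (orbit H r)} = (fun r' => (r', 0)) '' orbit H r := by
  ext ⟨r', x⟩
  by_cases hx : x = 0
  · simp [zdbFun, hx, orbit_eq_iff]
  · simp [zdbFun, hx, Ne.symm hx]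

theorem zdbFun_preimage_inr (s : R) :
    zdbFun G H ⁻¹' {.inr s} = (fun x : Additive G => (x.toMul⁻¹ • s, x)) '' {0}ᶜ := by
  ext ⟨r, x⟩
  by_cases hx : x = 0 <;> simp [zdbFun, hx, eq_inv_smul_iff, eq_comm]

theorem ncard_preimage_zdbFun_zero : (zdbFun G H ⁻¹' {zdbFun G H 0}).ncard = 1 := by
  have : orbit H (0 : R) = {0} := by
    ext; simp [mem_orbit_iff, eq_comm]
  rw [show zdbFun G H 0 = .inl (orbit H 0) from if_pos rfl, zdbFun_preimage_inl, this,
    image_singleton, ncard_singleton]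

theorem ncard_preimage_zdbFun_inl (hH : ∀ h ∈ H, (h : R) - 1 ≠ 0 → IsUnit ((h : R) - 1))
    {r : R} (hr : r ≠ 0) : (zdbFun G H ⁻¹' {.inl (orbit H r)}).ncard = Nat.card H := by
  rw [zdbFun_preimage_inl, ncard_image_of_injective _ fun _ _ h => (Prod.ext_iff.1 h).1,
    ncard_orbit_of_ne_zero hH hr]

variable [Finite R]

theorem ncard_preimage_zdbFun_inr (s : R) :
    (zdbFun G H ⁻¹' {.inr s}).ncard = Nat.card G - 1 := by
  rw [zdbFun_preimage_inr, ncard_image_of_injective _ fun _ _ h => (Prod.ext_iff.1 h).2,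
    ncard_compl, ncard_singleton, Nat.card_congr Additive.toMul]

theorem ncard_preimage_zdbFun_of_ne (hH : ∀ h ∈ H, (h : R) - 1 ≠ 0 → IsUnit ((h : R) - 1))
    (hcard : Nat.card H = Nat.card G - 1) {b : Set R ⊕ R} (hb : b ∈ range (zdbFun G H))
    (hb0 : b ≠ zdbFun G H 0) : (zdbFun G H ⁻¹' {b}).ncard = Nat.card G - 1 := by
  obtain ⟨⟨r, x⟩, rfl⟩ := hb
  by_cases hx : x = 0
  · have hr : r ≠ 0 := by
      rintro rfl
      exact hb0 (by rw [hx]; rfl)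
    rw [show zdbFun G H (r, x) = .inl (orbit H r) from if_pos hx,
      ncard_preimage_zdbFun_inl G H hH hr, hcard]
  · rw [show zdbFun G H (r, x) = .inr (x.toMul • r) from if_neg hx, ncard_preimage_zdbFun_inr]

theorem ncard_setOf_zdbFun_add_eq_of_snd_eq_zero
    (hH : ∀ h ∈ H, (h : R) - 1 ≠ 0 → IsUnit ((h : R) - 1)) {s : R} (hs : s ≠ 0) :
    {z | zdbFun G H (z + (s, 0)) = zdbFun G H z}.ncard = Nat.card H - 1 := by
  have hset : {z | zdbFun G H (z + (s, 0)) = zdbFun G H z}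
      = (fun r => (r, 0)) '' {r | r + s ∈ orbit H r} := by
    ext ⟨r, x⟩
    by_cases hx : x = 0
    · simp [zdbFun, hx, orbit_eq_iff]
    · simp [zdbFun, hx, Ne.symm hx, -toMul_smul, smul_eq_zero_iff_eq, hs]
  rw [hset, ncard_image_of_injective _ fun _ _ h => (Prod.ext_iff.1 h).1,
    ncard_setOf_add_mem_orbit hH hs]

theorem ncard_setOf_zdbFun_add_eq_of_snd_ne_zero
    (hG : ∀ g ∈ G, (g : R) - 1 ≠ 0 → IsUnit ((g : R) - 1)) (s : R) {g : Additive G}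
    (hg : g ≠ 0) : {z | zdbFun G H (z + (s, g)) = zdbFun G H z}.ncard = Nat.card G - 2 := by
  set r₀ := Ring.inverse (((g.toMul : Rˣ) : R) - 1) * -(g.toMul • s)
  have hset : {z | zdbFun G H (z + (s, g)) = zdbFun G H z} = (fun x => (r₀, x)) '' {0, -g}ᶜ := by
    ext ⟨r, x⟩
    by_cases hx : x = 0
    · simp [zdbFun, hx, hg]
    by_cases hxg : x + g = 0
    · simp [zdbFun, eq_neg_of_add_eq_zero_left hxg, hg]
    have hg1 : g.toMul ≠ 1 := by simpa using hg
    have key : (x + g).toMul • (r + s) = x.toMul • r ↔ r = r₀ := by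
      rw [toMul_add, mul_smul, smul_left_cancel_iff, smul_add, ← eq_add_neg_iff_add_eq,
        smul_eq_self_add_iff hG hg1]
    simp only [mem_ofPred_eq, zdbFun, Prod.mk_add_mk, hx, hxg, if_false, Sum.inr.injEq, key]
    have hxg' : x ≠ -g := fun h => hxg (by rw [h, neg_add_cancel])
    constructor
    · rintro rfl
      exact ⟨x, by simp [hx, hxg'], rfl⟩
    · rintro ⟨y, -, h⟩
      exact (Prod.ext_iff.1 h).1.symm
  rw [hset, ncard_image_of_injective _ fun _ _ h => (Prod.ext_iff.1 h).2, ncard_compl,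
    ncard_pair (by simpa [eq_comm] using hg), Nat.card_congr Additive.toMul]

theorem ncard_setOf_zdbFun_add_eq (hG : ∀ g ∈ G, (g : R) - 1 ≠ 0 → IsUnit ((g : R) - 1))
    (hH : ∀ h ∈ H, (h : R) - 1 ≠ 0 → IsUnit ((h : R) - 1))
    (hcard : Nat.card H = Nat.card G - 1) {a : R × Additive G} (ha : a ≠ 0) :
    {z | zdbFun G H (z + a) = zdbFun G H z}.ncard = Nat.card G - 2 := by
  obtain ⟨s, g⟩ := a
  by_cases hg : g = 0
  · subst hg
    rw [ncard_setOf_zdbFun_add_eq_of_snd_eq_zero G H hH (by simpa using ha), hcard, Nat.sub_sub]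
  · exact ncard_setOf_zdbFun_add_eq_of_snd_ne_zero G H hG s hg

theorem isZDB_zdbFun (hG : ∀ g ∈ G, (g : R) - 1 ≠ 0 → IsUnit ((g : R) - 1))
    (hH : ∀ h ∈ H, (h : R) - 1 ≠ 0 → IsUnit ((h : R) - 1))
    (hcard : Nat.card H = Nat.card G - 1) :
    IsZDB (zdbFun G H) (Nat.card G * Nat.card R)
      ((Nat.card G * Nat.card R - 1) / (Nat.card G - 1) + 1) (Nat.card G - 2) := by
  have hA : Nat.card (R × Additive G) = Nat.card G * Nat.card R := by
    rw [Nat.card_prod, Nat.card_congr Additive.toMul, mul_comm]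
  have hpart := card_eq_one_add_mul_of_ncard_fibers (zdbFun G H) (zdbFun G H 0) (Nat.card G - 1)
    (ncard_preimage_zdbFun_zero G H) fun _ => ncard_preimage_zdbFun_of_ne G H hH hcard
  have hrange : 1 ≤ (range (zdbFun G H)).ncard :=
    Nat.one_le_iff_ne_zero.2 ((ncard_pos (finite_range _)).2 (range_nonempty _)).ne'
  have hG1 : 0 < Nat.card G - 1 := hcard ▸ Nat.card_pos
  refine ⟨hA, ?_, fun _ => ncard_setOf_zdbFun_add_eq G H hG hH hcard⟩
  rw [← hA, hpart, Nat.add_sub_cancel_left, Nat.mul_div_cancel _ hG1, Nat.sub_add_cancel hrange]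

end ZDBFunction

/-- Proposition 3: the ZDB function of Theorem 1 has one fiber of size `1` and
`m = (en-1)/(e-1)` fibers of size `e - 1`. -/
theorem zdb_fiber_sizes {R : Type*} [CommRing R] [Fintype R]
    (G H : Subgroup Rˣ)
    (hG : ∀ g ∈ G, ((g : Rˣ) : R) - 1 ≠ 0 → IsUnit (((g : Rˣ) : R) - 1))
    (hH : ∀ h ∈ H, ((h : Rˣ) : R) - 1 ≠ 0 → IsUnit (((h : Rˣ) : R) - 1))
    (hcard : Nat.card H = Nat.card G - 1) :
    ∃ f : R × Additive G →
        ZMod ((Nat.card G * Nat.card R - 1) / (Nat.card G - 1) + 1),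
      IsZDB f (Nat.card G * Nat.card R)
        ((Nat.card G * Nat.card R - 1) / (Nat.card G - 1) + 1)
        (Nat.card G - 2) ∧
      ∃ b ∈ Set.range f, Set.ncard (f ⁻¹' {b}) = 1 ∧
        ∀ b' ∈ Set.range f, b' ≠ b →
          Set.ncard (f ⁻¹' {b'}) = Nat.card G - 1 := by
  obtain ⟨f, hf, hker⟩ := (isZDB_zdbFun G H hG hH hcard).exists_ker_eq_of_card_eq (Nat.card_zmod _)
  have hfiber : ∀ z, f ⁻¹' {f z} = zdbFun G H ⁻¹' {zdbFun G H z} := fun z => ext fun _ => hker _ _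
  refine ⟨f, hf, f 0, mem_range_self 0, ?_, ?_⟩
  · rw [hfiber, ncard_preimage_zdbFun_zero]
  · rintro _ ⟨z, rfl⟩ hz
    rw [hfiber]
    exact ncard_preimage_zdbFun_of_ne G H hH hcard (mem_range_self z) fun h => hz ((hker z 0).2 h)
end

section
/- Let q, n, d be positive integers and w_0, ..., w_{q−1} nonnegative integers with w_0 + ··· + w_{q−1} = n. If nd − n² + Σ w_i² > 0, then any constant composition code of length n over a q-ary alphabet with composition [w_0,...,w_{q−1}] and minimum Hamming distance d has size at most nd / (nd − n² + Σ w_i²). -/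
/-! Double count the agreements between ordered pairs of codewords: position `j` contributes
`∑ₐ kⱼₐ²`, where `kⱼₐ` is the number of codewords with symbol `a` at `j`. Hence the total
distance over all ordered pairs is `M²n - ∑ⱼₐ kⱼₐ²`, and it is at least `M(M-1)d`. Constant
composition fixes `∑ⱼ kⱼₐ = M wₐ`, so Cauchy–Schwarz gives `n ∑ⱼ kⱼₐ² ≥ M² wₐ²`. Together,
`n M(M-1)d ≤ M²n² - M² ∑ₐ wₐ²`, which rearranges to the bound. -/

open Finset

section ConstantCompositionCode

variable {ι α : Type*} [Fintype ι] [DecidableEq α]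

def symbolCount (C : Finset (ι → α)) (j : ι) (a : α) : ℕ := #{c ∈ C | c j = a}

theorem hammingDist_add_card_filter_eq (c c' : ι → α) :
    hammingDist c c' + #{j | c j = c' j} = Fintype.card ι := by
  rw [hammingDist, add_comm]
  exact card_filter_add_card_filter_not _

theorem sum_sum_card_filter_eq [Fintype α] (C : Finset (ι → α)) :
    ∑ c ∈ C, ∑ c' ∈ C, #{j | c j = c' j} = ∑ j, ∑ a, symbolCount C j a ^ 2 := by
  have column (j : ι) : ∑ c ∈ C, symbolCount C j (c j) = ∑ a, symbolCount C j a ^ 2 := by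
    rw [← sum_fiberwise C (fun c => c j)]
    refine sum_congr rfl fun a _ => ?_
    rw [sum_congr rfl fun c hc => by rw [(mem_filter.1 hc).2], sum_const, smul_eq_mul, sq]
    rfl
  calc ∑ c ∈ C, ∑ c' ∈ C, #{j | c j = c' j}
      = ∑ c ∈ C, ∑ j, ∑ c' ∈ C, if c' j = c j then 1 else 0 := by
        simp only [card_filter, eq_comm]
        exact sum_congr rfl fun c _ => sum_comm
    _ = ∑ j, ∑ c ∈ C, symbolCount C j (c j) := by
        simp only [symbolCount, card_filter]
        exact sum_comm
    _ = ∑ j, ∑ a, symbolCount C j a ^ 2 := sum_congr rfl fun j _ => column j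

theorem sum_sum_hammingDist_add_sum_sum_sq_symbolCount [Fintype α] (C : Finset (ι → α)) :
    ∑ c ∈ C, ∑ c' ∈ C, hammingDist c c' + ∑ j, ∑ a, symbolCount C j a ^ 2
      = #C * #C * Fintype.card ι := by
  rw [← sum_sum_card_filter_eq, ← sum_add_distrib]
  simp only [← sum_add_distrib, hammingDist_add_card_filter_eq, sum_const, smul_eq_mul, mul_assoc]

theorem sum_symbolCount_eq (C : Finset (ι → α)) (a : α) (w : ℕ)
    (hcomp : ∀ c ∈ C, #{j | c j = a} = w) :
    ∑ j, symbolCount C j a = #C * w := by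
  simp only [symbolCount, card_filter]
  rw [sum_comm]
  simp only [← card_filter]
  rw [sum_congr rfl hcomp, sum_const, smul_eq_mul]

theorem sq_card_mul_sum_sq_le [Fintype α] (C : Finset (ι → α)) (w : α → ℕ)
    (hcomp : ∀ c ∈ C, ∀ a, #{j | c j = a} = w a) :
    #C ^ 2 * ∑ a, w a ^ 2 ≤ Fintype.card ι * ∑ j, ∑ a, symbolCount C j a ^ 2 := by
  rw [mul_sum, sum_comm, mul_sum]
  refine sum_le_sum fun a _ => ?_
  calc #C ^ 2 * w a ^ 2 = (∑ j, symbolCount C j a) ^ 2 := by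
        rw [sum_symbolCount_eq C a (w a) fun c hc => hcomp c hc a]
        ring
    _ ≤ Fintype.card ι * ∑ j, symbolCount C j a ^ 2 := sq_sum_le_card_mul_sum_sq

theorem card_mul_pred_mul_le_sum_sum_hammingDist (C : Finset (ι → α)) (d : ℕ)
    (hdist : ∀ c ∈ C, ∀ c' ∈ C, c ≠ c' → d ≤ hammingDist c c') :
    #C * (#C - 1) * d ≤ ∑ c ∈ C, ∑ c' ∈ C, hammingDist c c' := by
  rw [mul_assoc, ← smul_eq_mul, ← sum_const]
  refine sum_le_sum fun c hc => ?_
  rw [← add_sum_erase C _ hc, hammingDist_self, zero_add, ← card_erase_of_mem hc]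
  exact card_nsmul_le_sum _ _ _ fun c' hc' =>
    hdist c hc c' (mem_of_mem_erase hc') (ne_of_mem_erase hc').symm

theorem card_mul_add_le_of_constant_composition [Fintype α] (C : Finset (ι → α)) (d : ℕ)
    (w : α → ℕ) (hcomp : ∀ c ∈ C, ∀ a, #{j | c j = a} = w a)
    (hdist : ∀ c ∈ C, ∀ c' ∈ C, c ≠ c' → d ≤ hammingDist c c') :
    #C * (Fintype.card ι * d + ∑ a, w a ^ 2) ≤ Fintype.card ι * d + #C * Fintype.card ι ^ 2 := by
  have htotal := sum_sum_hammingDist_add_sum_sum_sq_symbolCount C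
  have hlow := card_mul_pred_mul_le_sum_sum_hammingDist C d hdist
  have hcs := sq_card_mul_sum_sq_le C w hcomp
  cases hM : #C with
  | zero => simp
  | succ m =>
    rw [hM] at htotal hlow hcs
    simp only [add_tsub_cancel_right] at hlow
    refine Nat.le_of_mul_le_mul_left ?_ m.succ_pos
    nlinarith [Nat.mul_le_mul_left (Fintype.card ι) hlow]

end ConstantCompositionCode

theorem ccc_bound_general (q n d : ℕ)
    (w : Fin q → ℕ)
    (C : Finset (Fin n → Fin q))
    (hcomp : ∀ c ∈ C, ∀ i : Fin q,
      (Finset.univ.filter fun j => c j = i).card = w i)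
    (hdist : ∀ c ∈ C, ∀ c' ∈ C, c ≠ c' → d ≤ hammingDist c c')
    (hpos : (0 : ℝ) < n * d - n ^ 2 + ∑ i, (w i : ℝ) ^ 2) :
    (C.card : ℝ) ≤ n * d / (n * d - n ^ 2 + ∑ i, (w i : ℝ) ^ 2) := by
  have key := card_mul_add_le_of_constant_composition C d w hcomp hdist
  rw [Fintype.card_fin] at key
  have key_real : (C.card : ℝ) * (n * d + ∑ i, (w i : ℝ) ^ 2) ≤ n * d + C.card * n ^ 2 := by
    exact_mod_cast key
  rw [le_div_iff₀ hpos]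
  linarith

/-- The Luo–Fu–Vinck–Chen bound for constant composition codes: if
`nd - n² + Σ wᵢ² > 0`, then any `q`-ary constant composition code of length `n`,
composition `[w₀, ..., w_{q-1}]` and minimum distance `d` has size at most
`nd / (nd - n² + Σ wᵢ²)`. -/
theorem ccc_bound (q n d : ℕ) (hq : 0 < q) (hn : 0 < n) (hd : 0 < d)
    (w : Fin q → ℕ) (hw : ∑ i, w i = n)
    (C : Finset (Fin n → Fin q))
    (hcomp : ∀ c ∈ C, ∀ i : Fin q,
      (Finset.univ.filter fun j => c j = i).card = w i)
    (hdist : ∀ c ∈ C, ∀ c' ∈ C, c ≠ c' → d ≤ hammingDist c c')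
    (hpos : (0 : ℝ) < n * d - n ^ 2 + ∑ i, (w i : ℝ) ^ 2) :
    (C.card : ℝ) ≤ n * d / (n * d - n ^ 2 + ∑ i, (w i : ℝ) ^ 2) :=
  ccc_bound_general q n d w C hcomp hdist hpos
end

section
/- Let f be an (en, (en−1)/(e−1)+1, e−2) zero-difference balanced function from an abelian group A of order en onto Z_{(en−1)/(e−1)+1} as in Theorem 1. Then the code C = {(f(x + a))_{x ∈ A} : a ∈ A}, with coordinates indexed by A, is a constant composition code of length en, size en, composition [1, e−1, ..., e−1], and minimum Hamming distance en − e + 2, and this code meets the Luo–Fu–Vinck–Chen bound with equality (hence is optimal). -/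
/-- Theorem 2: the translate code of the ZDB function from Theorem 1 is an
optimal `(en, en, en-e+2, [1, e-1, ..., e-1])` constant composition code meeting
the Luo–Fu–Vinck–Chen bound with equality. -/
theorem ccc_from_zdb {A : Type*} [AddCommGroup A] [Fintype A] [DecidableEq A]
    (n e m : ℕ) (he : 2 ≤ e) (hn : 0 < n) (hm : m = (e * n - 1) / (e - 1))
    (hcardA : Fintype.card A = e * n)
    (f : A → ZMod (m + 1))
    (hsurj : Function.Surjective f)
    (hZDB : ∀ a : A, a ≠ 0 → Set.ncard {x : A | f (x + a) = f x} = e - 2)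
    (b₀ : ZMod (m + 1))
    (hfib1 : Set.ncard (f ⁻¹' {b₀}) = 1)
    (hfib : ∀ b : ZMod (m + 1), b ≠ b₀ → Set.ncard (f ⁻¹' {b}) = e - 1) :
    (Finset.image (fun a : A => fun x : A => f (x + a)) Finset.univ).card = e * n ∧
    (∀ a : A, Set.ncard {x : A | f (x + a) = b₀} = 1 ∧
      ∀ b : ZMod (m + 1), b ≠ b₀ → Set.ncard {x : A | f (x + a) = b} = e - 1) ∧
    (∀ a a' : A, a ≠ a' →
      hammingDist (fun x : A => f (x + a)) (fun x : A => f (x + a')) =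
        e * n - e + 2) ∧
    ((e * n : ℝ) =
      ((e : ℝ) * n * ((e : ℝ) * n - e + 2)) /
        ((e : ℝ) * n * ((e : ℝ) * n - e + 2) - ((e : ℝ) * n) ^ 2 +
          (1 + (m : ℝ) * ((e : ℝ) - 1) ^ 2))) := by
  have hele : e ≤ e * n := Nat.le_mul_of_pos_right e hn
  -- translation lemma on ncard
  have hsub_inj : ∀ a : A, Function.Injective (fun y : A => y - a) := by
    intro a y z h
    simpa using congrArg (fun t => t + a) h
  have htrans : ∀ (a : A) (s : Set A), {x : A | x + a ∈ s}.ncard = s.ncard := by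
    intro a s
    have himg : {x : A | x + a ∈ s} = (fun y : A => y - a) '' s := by
      ext x
      constructor
      · intro hx
        exact ⟨x + a, hx, by simp⟩
      · rintro ⟨y, hy, rfl⟩
        simpa using hy
    rw [himg, Set.ncard_image_of_injective s (hsub_inj a)]
  -- composition of each codeword
  have hcomp : ∀ a : A, Set.ncard {x : A | f (x + a) = b₀} = 1 ∧
      ∀ b : ZMod (m + 1), b ≠ b₀ → Set.ncard {x : A | f (x + a) = b} = e - 1 := by
    intro a
    constructor
    · exact (htrans a (f ⁻¹' {b₀})).trans hfib1
    · intro b hb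
      exact (htrans a (f ⁻¹' {b})).trans (hfib b hb)
  -- injectivity of the translate map
  have hinj : Function.Injective (fun a : A => fun x : A => f (x + a)) := by
    intro a a' h
    by_contra hne
    have hd : a - a' ≠ 0 := sub_ne_zero.mpr hne
    have hz := hZDB (a - a') hd
    have huniv : {x : A | f (x + (a - a')) = f x} = Set.univ := by
      ext y
      simp only [Set.mem_setOf_eq, Set.mem_univ, iff_true]
      have hy := congrFun h (y - a')
      simp only at hy
      have h1 : y - a' + a = y + (a - a') := by abel
      have h2 : y - a' + a' = y := by abel
      rw [h1, h2] at hy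
      exact hy
    rw [huniv, Set.ncard_univ, Nat.card_eq_fintype_card, hcardA] at hz
    omega
  have hpart1 : (Finset.image (fun a : A => fun x : A => f (x + a)) Finset.univ).card = e * n := by
    rw [Finset.card_image_of_injective _ hinj, Finset.card_univ, hcardA]
  -- hamming distance
  have hfilter_eq_ncard : ∀ (p : A → Prop) [DecidablePred p],
      (Finset.univ.filter p).card = {x : A | p x}.ncard := by
    intro p _
    rw [← Set.ncard_coe_finset]
    congr 1
    ext x
    simp
  have hdist : ∀ a a' : A, a ≠ a' →
      hammingDist (fun x : A => f (x + a)) (fun x : A => f (x + a')) = e * n - e + 2 := by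
    intro a a' hne
    have hset : {x : A | f (x + a) = f (x + a')} =
        (fun y : A => y - a') '' {y : A | f (y + (a - a')) = f y} := by
      ext x
      constructor
      · intro hx
        refine ⟨x + a', ?_, by simp⟩
        simp only [Set.mem_setOf_eq]
        have h1 : x + a' + (a - a') = x + a := by abel
        rw [h1]
        exact hx
      · rintro ⟨y, hy, rfl⟩
        simp only [Set.mem_setOf_eq] at hy ⊢
        have h1 : y - a' + a = y + (a - a') := by abel
        have h2 : y - a' + a' = y := by abel
        rw [h1, h2]
        exact hy
    have hncard : {x : A | f (x + a) = f (x + a')}.ncard = e - 2 := by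
      rw [hset, Set.ncard_image_of_injective _ (hsub_inj a')]
      exact hZDB (a - a') (sub_ne_zero.mpr hne)
    have heqcard : (Finset.univ.filter fun x : A => f (x + a) = f (x + a')).card = e - 2 := by
      rw [hfilter_eq_ncard]
      exact hncard
    have hsplit := Finset.card_filter_add_card_filter_not
      (s := (Finset.univ : Finset A)) (p := fun x : A => f (x + a) = f (x + a'))
    rw [Finset.card_univ, hcardA, heqcard] at hsplit
    have hdd : hammingDist (fun x : A => f (x + a)) (fun x : A => f (x + a')) =
        (Finset.univ.filter fun x : A => ¬ (f (x + a) = f (x + a'))).card := rfl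
    rw [hdd]
    omega
  -- key counting identity: 1 + m * (e - 1) = e * n
  have hkey : 1 + m * (e - 1) = e * n := by
    have hcard : Fintype.card A =
        ∑ b : ZMod (m + 1), (Finset.univ.filter fun x : A => f x = b).card := by
      rw [← Finset.card_univ]
      exact Finset.card_eq_sum_card_fiberwise (fun x _ => Finset.mem_univ _)
    have hconv : ∀ b : ZMod (m + 1),
        (Finset.univ.filter fun x : A => f x = b).card = (f ⁻¹' {b}).ncard := by
      intro b
      rw [hfilter_eq_ncard]
      rfl
    have hsum : ∑ b : ZMod (m + 1), (f ⁻¹' {b}).ncard = e * n := by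
      rw [← hcardA, hcard]
      exact Finset.sum_congr rfl fun b _ => (hconv b).symm
    rw [← Finset.add_sum_erase _ _ (Finset.mem_univ b₀), hfib1] at hsum
    have hconst : ∑ b ∈ Finset.univ.erase b₀, (f ⁻¹' {b}).ncard =
        (Finset.univ.erase b₀).card * (e - 1) := by
      rw [Finset.sum_congr rfl fun b hb => hfib b (Finset.ne_of_mem_erase hb)]
      simp [Finset.sum_const, mul_comm]
    rw [hconst, Finset.card_erase_of_mem (Finset.mem_univ b₀), Finset.card_univ] at hsum
    have : Fintype.card (ZMod (m + 1)) = m + 1 := ZMod.card (m + 1)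
    rw [this] at hsum
    simpa using hsum
  refine ⟨hpart1, hcomp, hdist, ?_⟩
  -- real arithmetic
  have hmr : (m : ℝ) * ((e : ℝ) - 1) = (e : ℝ) * n - 1 := by
    have h1 : (1 : ℝ) + (m : ℝ) * ((e : ℝ) - 1) = (e : ℝ) * n := by
      have := hkey
      have hc : ((1 + m * (e - 1) : ℕ) : ℝ) = ((e * n : ℕ) : ℝ) := by rw [this]
      push_cast [Nat.cast_sub (by omega : 1 ≤ e)] at hc
      linarith [hc]
    linarith
  have hdpos : (0 : ℝ) < (e : ℝ) * n - e + 2 := by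
    have h1 : (e : ℝ) ≤ (e : ℝ) * n := by
      have : (1 : ℝ) ≤ (n : ℝ) := by exact_mod_cast hn
      nlinarith [show (0:ℝ) ≤ (e:ℝ) from by positivity]
    linarith
  have hD : (e : ℝ) * n * ((e : ℝ) * n - e + 2) - ((e : ℝ) * n) ^ 2 +
      (1 + (m : ℝ) * ((e : ℝ) - 1) ^ 2) = (e : ℝ) * n - e + 2 := by
    have h2 : (m : ℝ) * ((e : ℝ) - 1) ^ 2 = ((e : ℝ) * n - 1) * ((e : ℝ) - 1) := by
      rw [sq]
      linear_combination ((e : ℝ) - 1) * hmr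
    rw [h2]
    ring
  rw [hD, mul_div_assoc, div_self (ne_of_gt hdpos), mul_one]
end
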